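/- arXiv:2603.00914 — 8 statements merged into one kernel-verified Lean document; each statement's English description precedes it below -/
import Mathlib

section
/- Let k ≥ 4 and suppose 0 < r ≤ L_i for every i ∈ {1,…,k}. Then the model graph (G_k)_{r,L} has exactly k² + k vertices, exactly 2k² − 2k edges, and is connected; consequently e((G_k)_{r,L}) − v((G_k)_{r,L}) + c((G_k)_{r,L}) = k² − 3k + 1. -/
/-- A pair `(x,y)` is a vertex of the model graph `(G_k)_{r,L}`. -/
def IsModelVertex (k : ℕ) (r : ℝ) (L : ℕ → ℝ) (p : ℕ × ℕ) : Prop :=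
  p.1 ≤ k ∧ p.2 ≤ k ∧ p.1 ≠ p.2 ∧ r ≤ L p.1 + L p.2

/-- The vertex type of the model graph `(G_k)_{r,L}`. -/
def ModelVertex (k : ℕ) (r : ℝ) (L : ℕ → ℝ) : Type :=
  {p : ℕ × ℕ // IsModelVertex k r L p}

/-- The adjacency relation of the model graph `(G_k)_{r,L}`. -/
def ModelAdj (r : ℝ) (L : ℕ → ℝ) (a b : ℕ × ℕ) : Prop :=
  (a.1 = b.1 ∧ ((a.2 = 0 ∧ b.2 ≠ 0) ∨ (a.2 ≠ 0 ∧ b.2 = 0)) ∧ r ≤ L a.1) ∨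
  (a.2 = b.2 ∧ ((a.1 = 0 ∧ b.1 ≠ 0) ∨ (a.1 ≠ 0 ∧ b.1 = 0)) ∧ r ≤ L a.2)

theorem ModelAdj.symm {r : ℝ} {L : ℕ → ℝ} {a b : ℕ × ℕ} (h : ModelAdj r L a b) :
    ModelAdj r L b a := by
  rcases h with ⟨h1, h2, h3⟩ | ⟨h1, h2, h3⟩
  · exact Or.inl ⟨h1.symm, by tauto, h1 ▸ h3⟩
  · exact Or.inr ⟨h1.symm, by tauto, h1 ▸ h3⟩

theorem ModelAdj.irrefl {r : ℝ} {L : ℕ → ℝ} {a : ℕ × ℕ} (h : ModelAdj r L a a) : False := by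
  rcases h with ⟨_, h2, _⟩ | ⟨_, h2, _⟩ <;> tauto

/-- The model graph `(G_k)_{r,L}`. -/
def modelGraph (k : ℕ) (r : ℝ) (L : ℕ → ℝ) : SimpleGraph (ModelVertex k r L) where
  Adj a b := ModelAdj r L a.val b.val
  symm := ⟨fun _ _ h => ModelAdj.symm h⟩
  loopless := ⟨fun _ h => ModelAdj.irrefl h⟩

/-! For `0 < r ≤ L i` (`1 ≤ i ≤ k`) every pair `(x, y)` with `x ≠ y` is a vertex, so there are
`(k + 1) k` of them. Each edge joins a vertex `(x, y)` with `x, y ≠ 0` to exactly one of the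
hubs `(x, 0)` and `(0, y)`, and each such vertex has both edges, so there are `2 k (k - 1)`
edges. The hubs `(x, 0)` and `(0, y)` are joined through `(x, y)` whenever `x ≠ y`; with a third
index available any two hubs are linked this way, and every other vertex hangs off a hub, so the
graph is connected. -/

theorem SimpleGraph.Connected.card_connectedComponent {V : Type*} {G : SimpleGraph V}
    (hG : G.Connected) : Nat.card G.ConnectedComponent = 1 :=
  have := hG.preconnected.subsingleton_connectedComponent
  have := hG.nonempty.map G.connectedComponentMk
  Nat.card_unique

theorem Finset.mem_offDiag_Icc {α : Type*} [Preorder α] [LocallyFiniteOrder α] [DecidableEq α]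
    {a b : α} {p : α × α} :
    p ∈ (Finset.Icc a b).offDiag ↔ a ≤ p.1 ∧ p.1 ≤ b ∧ a ≤ p.2 ∧ p.2 ≤ b ∧ p.1 ≠ p.2 := by
  simp only [Finset.mem_offDiag, Finset.mem_Icc, and_assoc]

structure SmallRadius (k : ℕ) (r : ℝ) (L : ℕ → ℝ) : Prop where
  pos : 0 < r
  L_zero : L 0 = 0
  le_L : ∀ i, 1 ≤ i → i ≤ k → r ≤ L i

namespace SmallRadius

variable {k : ℕ} {r : ℝ} {L : ℕ → ℝ}

theorem L_nonneg (h : SmallRadius k r L) {i : ℕ} (hi : i ≤ k) : 0 ≤ L i := by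
  rcases Nat.eq_zero_or_pos i with rfl | hi0
  · exact h.L_zero.ge
  · exact h.pos.le.trans (h.le_L i hi0 hi)

theorem isModelVertex_iff (h : SmallRadius k r L) (p : ℕ × ℕ) :
    IsModelVertex k r L p ↔ p ∈ (Finset.range (k + 1)).offDiag := by
  simp only [IsModelVertex, Finset.mem_offDiag, Finset.mem_range, Nat.lt_succ_iff]
  refine ⟨fun ⟨hx, hy, hxy, _⟩ => ⟨hx, hy, hxy⟩, fun ⟨hx, hy, hxy⟩ => ⟨hx, hy, hxy, ?_⟩⟩
  rcases Nat.eq_zero_or_pos p.1 with hx0 | hx0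
  · rw [hx0, h.L_zero, zero_add]
    exact h.le_L p.2 (by omega) hy
  · linarith [h.le_L p.1 hx0 hx, h.L_nonneg hy]

theorem card_modelVertex (h : SmallRadius k r L) : Nat.card (ModelVertex k r L) = k ^ 2 + k := by
  rw [Nat.card_congr (α := ModelVertex k r L) (Equiv.subtypeEquivRight h.isModelVertex_iff),
    Nat.card_eq_finsetCard, Finset.offDiag_card, Finset.card_range]
  exact Nat.sub_eq_of_eq_add (by ring)

def vertex (h : SmallRadius k r L) (x y : ℕ) (hx : x ≤ k) (hy : y ≤ k) (hxy : x ≠ y) :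
    ModelVertex k r L :=
  ⟨(x, y), (h.isModelVertex_iff _).mpr (by simp only [Finset.mem_offDiag, Finset.mem_range]; omega)⟩

theorem vertex_inj (h : SmallRadius k r L) {x y x' y' : ℕ} {hx hy hxy hx' hy' hxy'} :
    h.vertex x y hx hy hxy = h.vertex x' y' hx' hy' hxy' ↔ x = x' ∧ y = y' :=
  Subtype.ext_iff.trans Prod.ext_iff

theorem adj_row (h : SmallRadius k r L) {x y : ℕ} (hx : 1 ≤ x) (hxk : x ≤ k) (hy : 1 ≤ y)
    (hyk : y ≤ k) (hxy : x ≠ y) :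
    (modelGraph k r L).Adj (h.vertex x 0 hxk k.zero_le (by omega)) (h.vertex x y hxk hyk hxy) :=
  Or.inl ⟨rfl, Or.inl ⟨rfl, Nat.one_le_iff_ne_zero.mp hy⟩, h.le_L x hx hxk⟩

theorem adj_col (h : SmallRadius k r L) {x y : ℕ} (hx : 1 ≤ x) (hxk : x ≤ k) (hy : 1 ≤ y)
    (hyk : y ≤ k) (hxy : x ≠ y) :
    (modelGraph k r L).Adj (h.vertex 0 y k.zero_le hyk (by omega)) (h.vertex x y hxk hyk hxy) :=
  Or.inr ⟨rfl, Or.inl ⟨rfl, Nat.one_le_iff_ne_zero.mp hx⟩, h.le_L y hy hyk⟩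

/-- The edges at `(x, y)`, `x, y ≠ 0`: to `(x, 0)` on the left, to `(0, y)` on the right. -/
def edgeOfInnerPair (h : SmallRadius k r L) :
    (Finset.Icc 1 k).offDiag ⊕ (Finset.Icc 1 k).offDiag → (modelGraph k r L).edgeSet
  | .inl ⟨(x, y), hp⟩ =>
    have hp := Finset.mem_offDiag_Icc.mp hp
    ⟨s(h.vertex x 0 hp.2.1 k.zero_le (by omega), h.vertex x y hp.2.1 hp.2.2.2.1 hp.2.2.2.2),
      h.adj_row hp.1 hp.2.1 hp.2.2.1 hp.2.2.2.1 hp.2.2.2.2⟩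
  | .inr ⟨(x, y), hp⟩ =>
    have hp := Finset.mem_offDiag_Icc.mp hp
    ⟨s(h.vertex 0 y k.zero_le hp.2.2.2.1 (by omega), h.vertex x y hp.2.1 hp.2.2.2.1 hp.2.2.2.2),
      h.adj_col hp.1 hp.2.1 hp.2.2.1 hp.2.2.2.1 hp.2.2.2.2⟩

theorem edgeOfInnerPair_injective (h : SmallRadius k r L) :
    Function.Injective h.edgeOfInnerPair := by
  rintro (⟨⟨x, y⟩, hp⟩ | ⟨⟨x, y⟩, hp⟩) (⟨⟨x', y'⟩, hp'⟩ | ⟨⟨x', y'⟩, hp'⟩) he <;>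
    obtain ⟨hx, -, hy, -⟩ := Finset.mem_offDiag_Icc.mp hp <;>
    obtain ⟨hx', -, hy', -⟩ := Finset.mem_offDiag_Icc.mp hp' <;>
    simp only [edgeOfInnerPair, Subtype.ext_iff, Sym2.eq_iff, vertex_inj] at he <;>
    simp only [Sum.inl.injEq, Sum.inr.injEq, reduceCtorEq, Subtype.mk.injEq, Prod.mk.injEq] <;>
    omega

theorem edgeOfInnerPair_surjective (h : SmallRadius k r L) :
    Function.Surjective h.edgeOfInnerPair := by
  rintro ⟨e, he⟩
  induction e using Sym2.ind with
  | _ a b =>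
  rw [SimpleGraph.mem_edgeSet] at he
  obtain ⟨⟨x, y⟩, hxk, hyk, hxy, -⟩ := a
  obtain ⟨⟨x', y'⟩, hxk', hyk', hxy', -⟩ := b
  change ModelAdj r L (x, y) (x', y') at he
  dsimp only [ModelAdj] at he hxk hyk hxy hxk' hyk' hxy'
  rcases he with ⟨rfl, ⟨rfl, hy'⟩ | ⟨hy, rfl⟩, -⟩ | ⟨rfl, ⟨rfl, hx'⟩ | ⟨hx, rfl⟩, -⟩
  · exact ⟨.inl ⟨(x, y'), Finset.mem_offDiag_Icc.mpr (by omega)⟩, rfl⟩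
  · exact ⟨.inl ⟨(x, y), Finset.mem_offDiag_Icc.mpr (by omega)⟩, Subtype.ext Sym2.eq_swap⟩
  · exact ⟨.inr ⟨(x', y), Finset.mem_offDiag_Icc.mpr (by omega)⟩, rfl⟩
  · exact ⟨.inr ⟨(x, y), Finset.mem_offDiag_Icc.mpr (by omega)⟩, Subtype.ext Sym2.eq_swap⟩

theorem card_edgeSet (h : SmallRadius k r L) :
    Nat.card (modelGraph k r L).edgeSet = 2 * k ^ 2 - 2 * k := by
  rw [← Nat.card_eq_of_bijective _ ⟨h.edgeOfInnerPair_injective, h.edgeOfInnerPair_surjective⟩,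
    Nat.card_sum, Nat.card_eq_finsetCard, Finset.offDiag_card, Nat.card_Icc, Nat.add_sub_cancel,
    sq]
  have := Nat.le_mul_self k
  omega

theorem reachable_row_col (h : SmallRadius k r L) {x y : ℕ} (hx : 1 ≤ x) (hxk : x ≤ k)
    (hy : 1 ≤ y) (hyk : y ≤ k) (hxy : x ≠ y) :
    (modelGraph k r L).Reachable (h.vertex x 0 hxk k.zero_le (by omega))
      (h.vertex 0 y k.zero_le hyk (by omega)) :=
  (h.adj_row hx hxk hy hyk hxy).reachable.trans (h.adj_col hx hxk hy hyk hxy).symm.reachable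

theorem reachable_row_hub (h : SmallRadius k r L) (hk : 3 ≤ k) {x : ℕ} (hx : 1 ≤ x)
    (hxk : x ≤ k) :
    (modelGraph k r L).Reachable (h.vertex x 0 hxk k.zero_le (by omega))
      (h.vertex 1 0 (by omega) k.zero_le one_ne_zero) := by
  obtain ⟨y, hy, hyk, hy1, hyx⟩ : ∃ y, 1 ≤ y ∧ y ≤ k ∧ y ≠ 1 ∧ y ≠ x :=
    ⟨if x = 2 then 3 else 2, by split_ifs <;> omega⟩
  exact (h.reachable_row_col hx hxk hy hyk hyx.symm).trans
    (h.reachable_row_col le_rfl (by omega) hy hyk hy1.symm).symm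

theorem reachable_col_hub (h : SmallRadius k r L) (hk : 3 ≤ k) {y : ℕ} (hy : 1 ≤ y)
    (hyk : y ≤ k) :
    (modelGraph k r L).Reachable (h.vertex 0 y k.zero_le hyk (by omega))
      (h.vertex 1 0 (by omega) k.zero_le one_ne_zero) := by
  rcases eq_or_ne y 1 with rfl | hy1
  · exact (h.reachable_row_col (x := 2) (by omega) (by omega) hy hyk (by omega)).symm.trans
      (h.reachable_row_hub hk (by omega) (by omega))
  · exact (h.reachable_row_col le_rfl (by omega) hy hyk hy1.symm).symm

theorem reachable_hub (h : SmallRadius k r L) (hk : 3 ≤ k) (v : ModelVertex k r L) :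
    (modelGraph k r L).Reachable v (h.vertex 1 0 (by omega) k.zero_le one_ne_zero) := by
  obtain ⟨⟨x, y⟩, hxk, hyk, hxy, -⟩ := v
  rcases Nat.eq_zero_or_pos x with rfl | hx
  · exact h.reachable_col_hub hk (by omega) hyk
  rcases Nat.eq_zero_or_pos y with rfl | hy
  · exact h.reachable_row_hub hk hx hxk
  · exact (h.adj_row hx hxk hy hyk hxy).symm.reachable.trans (h.reachable_row_hub hk hx hxk)

theorem connected (h : SmallRadius k r L) (hk : 3 ≤ k) : (modelGraph k r L).Connected :=
  (modelGraph k r L).connected_iff_exists_forall_reachable.mpr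
    ⟨_, fun v => (h.reachable_hub hk v).symm⟩

end SmallRadius

theorem model_counts_small_r_general (k : ℕ) (hk : 4 ≤ k) (r : ℝ) (hr : 0 < r) (L : ℕ → ℝ)
    (hL0 : L 0 = 0) (hrL : ∀ i, 1 ≤ i → i ≤ k → r ≤ L i) :
    Nat.card (ModelVertex k r L) = k ^ 2 + k ∧
    Nat.card (modelGraph k r L).edgeSet = 2 * k ^ 2 - 2 * k ∧
    (modelGraph k r L).Connected ∧
    (Nat.card (modelGraph k r L).edgeSet : ℤ) - (Nat.card (ModelVertex k r L) : ℤ)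
      + (Nat.card (modelGraph k r L).ConnectedComponent : ℤ)
      = (k : ℤ) ^ 2 - 3 * (k : ℤ) + 1 := by
  have h : SmallRadius k r L := ⟨hr, hL0, hrL⟩
  have hconn := h.connected (by omega)
  refine ⟨h.card_modelVertex, h.card_edgeSet, hconn, ?_⟩
  rw [h.card_modelVertex, h.card_edgeSet, hconn.card_connectedComponent,
    Nat.cast_sub (by nlinarith)]
  push_cast
  ring

/-- if `4 ≤ k` and `0 < r ≤ L i` for all `i ∈ {1,…,k}`, then `(G_k)_{r,L}`
has `k² + k` vertices, `2k² − 2k` edges, is connected, and `e − v + c = k² − 3k + 1`. -/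
theorem model_counts_small_r (k : ℕ) (hk : 4 ≤ k) (r : ℝ) (hr : 0 < r) (L : ℕ → ℝ)
    (hL0 : L 0 = 0) (hLpos : ∀ i, 1 ≤ i → i ≤ k → 0 < L i)
    (hrL : ∀ i, 1 ≤ i → i ≤ k → r ≤ L i) :
    Nat.card (ModelVertex k r L) = k ^ 2 + k ∧
    Nat.card (modelGraph k r L).edgeSet = 2 * k ^ 2 - 2 * k ∧
    (modelGraph k r L).Connected ∧
    (Nat.card (modelGraph k r L).edgeSet : ℤ) - (Nat.card (ModelVertex k r L) : ℤ)
      + (Nat.card (modelGraph k r L).ConnectedComponent : ℤ)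
      = (k : ℤ) ^ 2 - 3 * (k : ℤ) + 1 :=
  model_counts_small_r_general k hk r hr L hL0 hrL
end

section
/- Let k ≥ 4 and suppose L_2 ≥ L_3 ≥ ⋯ ≥ L_k. If L_4 < r and L_1 < r, then the model graph (G_k)_{r,L} is acyclic, i.e., it contains no cycles. -/
/-!
A cycle would give a nonempty vertex set in which every vertex has two distinct neighbours inside
the set. Every edge of the model graph joins a vertex with a zero coordinate to one without, along
a coordinate `i` with `r ≤ L i`; under the hypotheses only `i = 2, 3` qualify. A vertex `(x, y)`
with `x, y ≠ 0` is adjacent only to `(x, 0)` and `(0, y)`, so in such a set it must be `(2, 3)` or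
`(3, 2)`. These two have no common neighbour, so the set contains no vertex with a zero
coordinate, and then it contains no edge at all.
-/

namespace SimpleGraph

variable {V : Type*} {G : SimpleGraph V}

theorem Walk.IsCycle.nontrivial_neighborSet_inter_support {u v : V} {c : G.Walk u u}
    (hc : c.IsCycle) (hv : v ∈ c.support) :
    (G.neighborSet v ∩ {w | w ∈ c.support}).Nontrivial := by
  have : Finite (c.toSubgraph.neighborSet v) := c.finite_neighborSet_toSubgraph
  have htwo := hc.ncard_neighborSet_toSubgraph_eq_two hv
  have hnt : (c.toSubgraph.neighborSet v).Nontrivial :=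
    Set.one_lt_ncard_iff_nontrivial.mp (by omega)
  exact hnt.mono fun w hw => ⟨hw.adj_sub, c.mem_verts_toSubgraph.mp hw.snd_mem⟩

theorem isAcyclic_of_forall_nontrivial_eq_empty
    (h : ∀ s : Set V, (∀ v ∈ s, (G.neighborSet v ∩ s).Nontrivial) → s = ∅) : G.IsAcyclic := by
  intro v c hc
  have hempty := h {w | w ∈ c.support} fun w hw => hc.nontrivial_neighborSet_inter_support hw
  exact Set.eq_empty_iff_forall_notMem.mp hempty v c.start_mem_support

end SimpleGraph

namespace ModelVertex

variable {k : ℕ} {r : ℝ} {L : ℕ → ℝ}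

theorem fst_ne_snd (v : ModelVertex k r L) : v.val.1 ≠ v.val.2 := v.prop.2.2.1

end ModelVertex

section ModelGraph

variable {k : ℕ} {r : ℝ} {L : ℕ → ℝ} {p q : ℕ}

open ModelVertex

theorem modelGraph_adj_cases (hlong : ∀ i ≤ k, i ≠ 0 → r ≤ L i → i = p ∨ i = q)
    {u w : ModelVertex k r L} (h : (modelGraph k r L).Adj u w) :
    (u.val.1 = w.val.1 ∧ (u.val.1 = p ∨ u.val.1 = q) ∧ (u.val.2 = 0 ↔ w.val.2 ≠ 0)) ∨
    (u.val.2 = w.val.2 ∧ (u.val.2 = p ∨ u.val.2 = q) ∧ (u.val.1 = 0 ↔ w.val.1 ≠ 0)) := by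
  have hu := u.fst_ne_snd
  have hw := w.fst_ne_snd
  rcases h with ⟨h1, h2, h3⟩ | ⟨h1, h2, h3⟩
  · exact Or.inl ⟨h1, hlong _ u.prop.1 (by omega) h3, by omega⟩
  · exact Or.inr ⟨h1, hlong _ u.prop.2.1 (by omega) h3, by omega⟩

theorem modelGraph_adj_zero_coord_iff {u w : ModelVertex k r L}
    (h : (modelGraph k r L).Adj u w) :
    (u.val.1 = 0 ∨ u.val.2 = 0) ↔ (w.val.1 ≠ 0 ∧ w.val.2 ≠ 0) := by
  have hu := u.fst_ne_snd
  have hw := w.fst_ne_snd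
  rcases h with ⟨h1, h2, -⟩ | ⟨h1, h2, -⟩ <;> omega

theorem ModelVertex.coords_long_of_nontrivial_neighborSet
    (hlong : ∀ i ≤ k, i ≠ 0 → r ≤ L i → i = p ∨ i = q) {v : ModelVertex k r L}
    (h1 : v.val.1 ≠ 0) (h2 : v.val.2 ≠ 0) (hv : ((modelGraph k r L).neighborSet v).Nontrivial) :
    (v.val.1 = p ∨ v.val.1 = q) ∧ (v.val.2 = p ∨ v.val.2 = q) := by
  obtain ⟨a, ha, b, hb, hab⟩ := hv
  rcases modelGraph_adj_cases hlong ha with ⟨ha1, hap, ha2⟩ | ⟨ha1, hap, ha2⟩ <;>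
    rcases modelGraph_adj_cases hlong hb with ⟨hb1, hbp, hb2⟩ | ⟨hb1, hbp, hb2⟩
  · exact absurd (Subtype.ext (Prod.ext (by omega) (by omega))) hab
  · exact ⟨hap, hbp⟩
  · exact ⟨hbp, hap⟩
  · exact absurd (Subtype.ext (Prod.ext (by omega) (by omega))) hab

theorem ModelVertex.eq_of_adj_of_nontrivial_neighborSet
    (hlong : ∀ i ≤ k, i ≠ 0 → r ≤ L i → i = p ∨ i = q) {v a b : ModelVertex k r L}
    (hv : v.val.1 = 0 ∨ v.val.2 = 0) (ha : (modelGraph k r L).Adj v a)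
    (hb : (modelGraph k r L).Adj v b) (ha' : ((modelGraph k r L).neighborSet a).Nontrivial)
    (hb' : ((modelGraph k r L).neighborSet b).Nontrivial) : a = b := by
  obtain ⟨ha1, ha2⟩ := (modelGraph_adj_zero_coord_iff ha).mp hv
  obtain ⟨hb1, hb2⟩ := (modelGraph_adj_zero_coord_iff hb).mp hv
  have hap := coords_long_of_nontrivial_neighborSet hlong ha1 ha2 ha'
  have hbp := coords_long_of_nontrivial_neighborSet hlong hb1 hb2 hb'
  have hva := modelGraph_adj_cases hlong ha
  have hvb := modelGraph_adj_cases hlong hb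
  have := a.fst_ne_snd
  have := b.fst_ne_snd
  exact Subtype.ext (Prod.ext (by omega) (by omega))

theorem modelGraph_eq_empty_of_forall_nontrivial
    (hlong : ∀ i ≤ k, i ≠ 0 → r ≤ L i → i = p ∨ i = q) (s : Set (ModelVertex k r L))
    (hs : ∀ v ∈ s, ((modelGraph k r L).neighborSet v ∩ s).Nontrivial) : s = ∅ := by
  have hcoords : ∀ v ∈ s, ¬(v.val.1 = 0 ∨ v.val.2 = 0) := by
    intro v hv hzero
    obtain ⟨a, ⟨ha, has⟩, b, ⟨hb, hbs⟩, hab⟩ := hs v hv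
    exact hab (eq_of_adj_of_nontrivial_neighborSet hlong hzero ha hb
      ((hs a has).mono Set.inter_subset_left) ((hs b hbs).mono Set.inter_subset_left))
  refine Set.eq_empty_iff_forall_notMem.mpr fun v hv => ?_
  obtain ⟨a, ⟨ha, has⟩, -⟩ := hs v hv
  have := modelGraph_adj_zero_coord_iff ha
  have := hcoords v hv
  have := hcoords a has
  tauto

end ModelGraph

theorem model_acyclic_of_L4_lt_general (k : ℕ) (r : ℝ) (L : ℕ → ℝ)
    (hmono : ∀ i j, 2 ≤ i → i ≤ j → j ≤ k → L j ≤ L i)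
    (hL4 : L 4 < r) (hL1 : L 1 < r) :
    (modelGraph k r L).IsAcyclic := by
  have hlong : ∀ i ≤ k, i ≠ 0 → r ≤ L i → i = 2 ∨ i = 3 := by
    intro i hik hi0 hri
    by_contra! hi
    obtain rfl | h4 : i = 1 ∨ 4 ≤ i := by omega
    · linarith
    · linarith [hmono 4 i (by norm_num) h4 hik]
  exact SimpleGraph.isAcyclic_of_forall_nontrivial_eq_empty
    (modelGraph_eq_empty_of_forall_nontrivial hlong)

/-- if `4 ≤ k`, `L 2 ≥ L 3 ≥ ⋯ ≥ L k`, `L 4 < r` and `L 1 < r`, then the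
model graph `(G_k)_{r,L}` is acyclic. -/
theorem model_acyclic_of_L4_lt (k : ℕ) (hk : 4 ≤ k) (r : ℝ) (hr : 0 < r) (L : ℕ → ℝ)
    (hL0 : L 0 = 0) (hLpos : ∀ i, 1 ≤ i → i ≤ k → 0 < L i)
    (hmono : ∀ i j, 2 ≤ i → i ≤ j → j ≤ k → L j ≤ L i)
    (hL4 : L 4 < r) (hL1 : L 1 < r) :
    (modelGraph k r L).IsAcyclic :=
  model_acyclic_of_L4_lt_general k r L hmono hL4 hL1
end

section
/- Let k ≥ 4, suppose L_2 ≥ L_3 ≥ ⋯ ≥ L_k, L_4 < r ≤ L_3, and r ≤ L_1. Then the model graph (G_k)_{r,L} has exactly k(k−1) + 6 − 2h vertices, exactly 6(k−1) edges, and exactly (k−3)(k−4) + 1 − 2h connected components; in particular e((G_k)_{r,L}) − v((G_k)_{r,L}) + c((G_k)_{r,L}) = 1. -/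
/-- The number `h` of unordered pairs `{i,j} ⊆ {1,…,k}` with `i ≠ j` and `L i + L j < r`,
counted via representatives `i < j`. -/
noncomputable def pairCount (k : ℕ) (r : ℝ) (L : ℕ → ℝ) : ℕ :=
  Set.ncard {p : ℕ × ℕ | 1 ≤ p.1 ∧ p.1 < p.2 ∧ p.2 ≤ k ∧ L p.1 + L p.2 < r}

/-!
Under the hypotheses the long legs (those with `r ≤ L x`) are exactly `1, 2, 3`. A vertex with a
zero coordinate is a hub `(x, 0)` or `(0, x)` with `x` long, and every edge joins such a hub to a
pair sharing its long coordinate, so `e = 2 · 3 · (k - 1)`. Pairs without a long coordinate are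
isolated vertices, while all other vertices lie in one component: two hubs `(x, 0)`, `(x', 0)` are
joined through `(0, z)` for a third long leg `z`. Finally `v` and `c` are obtained by counting the
pairs `i ≠ j` with `r ≤ L i + L j` among all legs, resp. among the short legs, against the `2h`
pairs with `L i + L j < r`, none of which involves a long leg.
-/

open Finset SimpleGraph

theorem Finset.card_filter_offDiag_eq_two_mul {α : Type*} [LinearOrder α] (s : Finset α)
    (P : α × α → Prop) [DecidablePred P] (hP : ∀ p, P p.swap ↔ P p) :
    #(s.offDiag.filter P) = 2 * #(s.offDiag.filter fun p => p.1 < p.2 ∧ P p) := by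
  have hsplit := card_filter_add_card_filter_not (s := s.offDiag.filter P) fun p => p.1 < p.2
  have hswap : #({p ∈ s.offDiag | P p ∧ ¬p.1 < p.2}) = #({p ∈ s.offDiag | p.1 < p.2 ∧ P p}) := by
    refine card_nbij' Prod.swap Prod.swap ?_ ?_ (fun _ _ => rfl) (fun _ _ => rfl) <;>
    · intro p hp
      simp only [mem_coe, mem_filter, mem_offDiag, Prod.fst_swap, Prod.snd_swap, hP, not_lt] at hp ⊢
      grind
  rw [filter_filter, filter_filter, hswap] at hsplit
  simp only [and_comm (a := P _)] at hsplit
  omega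

theorem Nat.card_subtype_eq_card {α : Type*} {P : α → Prop} (s : Finset α)
    (h : ∀ a, P a ↔ a ∈ s) : Nat.card {a // P a} = #s :=
  (Nat.card_congr (Equiv.subtypeEquivRight h)).trans (Nat.card_eq_finsetCard s)

section PairCounting

variable (r : ℝ) (L : ℕ → ℝ)

noncomputable def admissiblePairs (s : Finset ℕ) : Finset (ℕ × ℕ) :=
  s.offDiag.filter fun p => r ≤ L p.1 + L p.2

noncomputable def shortPairs (s : Finset ℕ) : Finset (ℕ × ℕ) :=
  s.offDiag.filter fun p => L p.1 + L p.2 < r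

theorem card_admissiblePairs_add_card_shortPairs (s : Finset ℕ) :
    #(admissiblePairs r L s) + #(shortPairs r L s) + #s = #s * #s := by
  have := card_filter_add_card_filter_not (s := s.offDiag) fun p => r ≤ L p.1 + L p.2
  simp only [not_le] at this
  rw [admissiblePairs, shortPairs, this, offDiag_card]
  exact Nat.sub_add_cancel (Nat.le_mul_self _)

theorem card_shortPairs_Icc (k : ℕ) : #(shortPairs r L (Icc 1 k)) = 2 * pairCount k r L := by
  rw [shortPairs,
    card_filter_offDiag_eq_two_mul _ _ fun p => by rw [Prod.fst_swap, Prod.snd_swap, add_comm],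
    pairCount, ← Set.ncard_coe_finset]
  congr 2
  ext p
  simp only [coe_filter, mem_offDiag, mem_Icc, Set.mem_ofPred_eq]
  constructor
  · rintro ⟨⟨⟨h1, -⟩, ⟨-, h2⟩, -⟩, hlt, hL⟩
    exact ⟨h1, hlt, h2, hL⟩
  · rintro ⟨h1, hlt, h2, hL⟩
    exact ⟨⟨⟨h1, by omega⟩, ⟨by omega, h2⟩, hlt.ne⟩, hlt, hL⟩

end PairCounting

section ModelGraph

variable {k : ℕ} {r : ℝ} {L : ℕ → ℝ}

variable (k r L) in
noncomputable def longLegs : Finset ℕ := (Icc 1 k).filter fun x => r ≤ L x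

theorem mem_longLegs {x : ℕ} : x ∈ longLegs k r L ↔ (1 ≤ x ∧ x ≤ k) ∧ r ≤ L x := by
  rw [longLegs, mem_filter, mem_Icc]

theorem longLegs_subset_Icc : longLegs k r L ⊆ Icc 1 k := filter_subset _ _

theorem isModelVertex_iff (hL0 : L 0 = 0) {p : ℕ × ℕ} :
    IsModelVertex k r L p ↔ p ∈ admissiblePairs r L (Icc 1 k) ∪
      (({0} ×ˢ longLegs k r L) ∪ (longLegs k r L ×ˢ {0})) := by
  obtain ⟨x, y⟩ := p
  simp only [IsModelVertex, admissiblePairs, mem_union, mem_filter, mem_offDiag, mem_Icc,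
    mem_product, mem_singleton, mem_longLegs]
  grind

theorem natCard_modelVertex (hL0 : L 0 = 0) :
    Nat.card (ModelVertex k r L) = #(admissiblePairs r L (Icc 1 k)) + 2 * #(longLegs k r L) := by
  rw [ModelVertex, Nat.card_subtype_eq_card _ fun p => isModelVertex_iff hL0,
    card_union_of_disjoint, card_union_of_disjoint, card_product, card_product, card_singleton]
  · ring
  all_goals
    simp only [Finset.disjoint_left, admissiblePairs, mem_union, mem_filter, mem_offDiag, mem_Icc,
      mem_product, mem_singleton, mem_longLegs]
    omega

theorem isModelVertex_of_mem_longLegs (hL : ∀ i ≤ k, 0 ≤ L i) {x y : ℕ}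
    (hx : x ∈ longLegs k r L) (hy : y ≤ k) (hxy : x ≠ y) :
    IsModelVertex k r L (x, y) ∧ IsModelVertex k r L (y, x) := by
  rw [mem_longLegs] at hx
  have := hL y hy
  exact ⟨⟨hx.1.2, hy, hxy, by linarith⟩, ⟨hy, hx.1.2, hxy.symm, by linarith⟩⟩

def rowEdge (p : ℕ × ℕ) : Sym2 (ℕ × ℕ) := s((p.1, 0), p)

-- Indexed by the swapped pair, so that both edge families are parametrised by `longLegPairs`.
def colEdge (p : ℕ × ℕ) : Sym2 (ℕ × ℕ) := s((0, p.1), p.swap)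

theorem rowEdge_injective : Function.Injective rowEdge := by
  intro p q h
  simp only [rowEdge, Sym2.eq_iff, Prod.ext_iff] at h
  grind

theorem colEdge_injective : Function.Injective colEdge := by
  intro p q h
  simp only [colEdge, Sym2.eq_iff, Prod.ext_iff, Prod.fst_swap, Prod.snd_swap] at h
  grind

theorem rowEdge_ne_colEdge {p q : ℕ × ℕ} (hp : p.1 ≠ 0) : rowEdge p ≠ colEdge q := by
  simp only [rowEdge, colEdge, ne_eq, Sym2.eq_iff, Prod.ext_iff, Prod.fst_swap, Prod.snd_swap]
  grind

variable (k r L) in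
noncomputable def longLegPairs : Finset (ℕ × ℕ) :=
  (longLegs k r L ×ˢ Icc 1 k).filter fun p => p.1 ≠ p.2

theorem mem_longLegPairs {p : ℕ × ℕ} :
    p ∈ longLegPairs k r L ↔ p.1 ∈ longLegs k r L ∧ (1 ≤ p.2 ∧ p.2 ≤ k) ∧ p.1 ≠ p.2 := by
  rw [longLegPairs, mem_filter, mem_product, mem_Icc, and_assoc]

theorem card_longLegPairs : #(longLegPairs k r L) = #(longLegs k r L) * (k - 1) := by
  rw [longLegPairs, card_filter, sum_product, ← smul_eq_mul, ← sum_const]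
  refine sum_congr rfl fun x hx => ?_
  rw [← card_filter, filter_ne, card_erase_of_mem (longLegs_subset_Icc hx), Nat.card_Icc,
    Nat.add_sub_cancel]

theorem exists_eq_rowEdge_or_colEdge_of_adj {u v : ModelVertex k r L}
    (h : (modelGraph k r L).Adj u v) :
    ∃ p ∈ longLegPairs k r L, s(u.1, v.1) = rowEdge p ∨ s(u.1, v.1) = colEdge p := by
  obtain ⟨⟨a, b⟩, ha⟩ := u
  obtain ⟨⟨c, d⟩, hc⟩ := v
  simp only [IsModelVertex] at ha hc
  rcases h with ⟨h1, ⟨rfl, hd⟩ | ⟨hb, rfl⟩, h3⟩ | ⟨h1, ⟨rfl, hc0⟩ | ⟨ha0, rfl⟩, h3⟩ <;>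
    dsimp only at * <;> subst h1
  · exact ⟨(a, d), mem_longLegPairs.2 ⟨mem_longLegs.2 ⟨⟨by omega, ha.1⟩, h3⟩, ⟨by omega, hc.2.1⟩,
      hc.2.2.1⟩, Or.inl rfl⟩
  · exact ⟨(a, b), mem_longLegPairs.2 ⟨mem_longLegs.2 ⟨⟨by omega, ha.1⟩, h3⟩, ⟨by omega, ha.2.1⟩,
      ha.2.2.1⟩, Or.inl Sym2.eq_swap⟩
  · exact ⟨(b, c), mem_longLegPairs.2 ⟨mem_longLegs.2 ⟨⟨by omega, ha.2.1⟩, h3⟩, ⟨by omega, hc.1⟩,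
      hc.2.2.1.symm⟩, Or.inr rfl⟩
  · exact ⟨(b, a), mem_longLegPairs.2 ⟨mem_longLegs.2 ⟨⟨by omega, ha.2.1⟩, h3⟩, ⟨by omega, ha.1⟩,
      ha.2.2.1.symm⟩, Or.inr Sym2.eq_swap⟩

theorem ne_zero_of_mem_longLegs {x : ℕ} (hx : x ∈ longLegs k r L) : x ≠ 0 := by
  have := (mem_longLegs.1 hx).1.1
  omega

def rowHub (hL : ∀ i ≤ k, 0 ≤ L i) {x : ℕ} (hx : x ∈ longLegs k r L) : ModelVertex k r L :=
  ⟨(x, 0), (isModelVertex_of_mem_longLegs hL hx k.zero_le (ne_zero_of_mem_longLegs hx)).1⟩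

def colHub (hL : ∀ i ≤ k, 0 ≤ L i) {y : ℕ} (hy : y ∈ longLegs k r L) : ModelVertex k r L :=
  ⟨(0, y), (isModelVertex_of_mem_longLegs hL hy k.zero_le (ne_zero_of_mem_longLegs hy)).2⟩

theorem adj_rowHub (hL : ∀ i ≤ k, 0 ≤ L i) {x : ℕ} (hx : x ∈ longLegs k r L) {v : ModelVertex k r L}
    (hv₁ : v.1.1 = x) (hv₂ : v.1.2 ≠ 0) : (modelGraph k r L).Adj (rowHub hL hx) v :=
  Or.inl ⟨hv₁.symm, Or.inl ⟨rfl, hv₂⟩, (mem_longLegs.1 hx).2⟩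

theorem adj_colHub (hL : ∀ i ≤ k, 0 ≤ L i) {y : ℕ} (hy : y ∈ longLegs k r L) {v : ModelVertex k r L}
    (hv₂ : v.1.2 = y) (hv₁ : v.1.1 ≠ 0) : (modelGraph k r L).Adj (colHub hL hy) v :=
  Or.inr ⟨hv₂.symm, Or.inl ⟨rfl, hv₁⟩, (mem_longLegs.1 hy).2⟩

theorem image_val_edgeSet (hL : ∀ i ≤ k, 0 ≤ L i) :
    Sym2.map (α := ModelVertex k r L) Subtype.val '' (modelGraph k r L).edgeSet =
      ↑((longLegPairs k r L).image rowEdge ∪ (longLegPairs k r L).image colEdge) := by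
  ext e
  simp only [coe_union, coe_image, Set.mem_union, Set.mem_image, mem_coe]
  constructor
  · rintro ⟨e, he, rfl⟩
    induction e using Sym2.ind with
    | _ u v =>
      obtain ⟨p, hp, h | h⟩ := exists_eq_rowEdge_or_colEdge_of_adj he
      · exact Or.inl ⟨p, hp, h.symm⟩
      · exact Or.inr ⟨p, hp, h.symm⟩
  · rintro (⟨p, hp, rfl⟩ | ⟨p, hp, rfl⟩) <;> obtain ⟨hx, hy, hxy⟩ := mem_longLegPairs.1 hp
    · let v : ModelVertex k r L := ⟨p, (isModelVertex_of_mem_longLegs hL hx hy.2 hxy).1⟩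
      exact ⟨s(rowHub hL hx, v), adj_rowHub hL hx rfl (show p.2 ≠ 0 by omega), rfl⟩
    · let v : ModelVertex k r L := ⟨p.swap, (isModelVertex_of_mem_longLegs hL hx hy.2 hxy).2⟩
      exact ⟨s(colHub hL hx, v), adj_colHub hL hx rfl (show p.2 ≠ 0 by omega), rfl⟩

theorem natCard_edgeSet (hL : ∀ i ≤ k, 0 ≤ L i) :
    Nat.card (modelGraph k r L).edgeSet = 2 * (#(longLegs k r L) * (k - 1)) := by
  have hdisj :
      Disjoint ((longLegPairs k r L).image rowEdge) ((longLegPairs k r L).image colEdge) := by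
    simp only [Finset.disjoint_left, mem_image]
    rintro _ ⟨p, hp, rfl⟩ ⟨q, -, hq⟩
    exact rowEdge_ne_colEdge (ne_zero_of_mem_longLegs (mem_longLegPairs.1 hp).1) hq.symm
  rw [Nat.card_coe_set_eq, ← Set.ncard_image_of_injective (modelGraph k r L).edgeSet
      (Sym2.map.injective Subtype.val_injective),
    image_val_edgeSet hL, Set.ncard_coe_finset, card_union_of_disjoint hdisj,
    card_image_of_injective _ rowEdge_injective, card_image_of_injective _ colEdge_injective,
    card_longLegPairs, two_mul]

variable (k r L) in
def TouchesLongLeg (p : ℕ × ℕ) : Prop := p.1 ∈ longLegs k r L ∨ p.2 ∈ longLegs k r L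

theorem isModelVertex_and_not_touchesLongLeg_iff (hL0 : L 0 = 0) {p : ℕ × ℕ} :
    IsModelVertex k r L p ∧ ¬TouchesLongLeg k r L p ↔
      p ∈ admissiblePairs r L (Icc 1 k \ longLegs k r L) := by
  obtain ⟨x, y⟩ := p
  simp only [IsModelVertex, TouchesLongLeg, admissiblePairs, mem_filter, mem_offDiag, mem_sdiff,
    mem_Icc, mem_longLegs]
  grind

theorem touchesLongLeg_of_adj {u v : ModelVertex k r L} (h : (modelGraph k r L).Adj u v) :
    TouchesLongLeg k r L u.1 := by
  obtain ⟨p, hp, he | he⟩ := exists_eq_rowEdge_or_colEdge_of_adj h <;>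
    rcases Sym2.mem_iff.1 (he ▸ Sym2.mem_mk_left u.1 v.1) with hu | hu <;>
    rw [TouchesLongLeg, hu]
  exacts [.inl (mem_longLegPairs.1 hp).1, .inl (mem_longLegPairs.1 hp).1,
    .inr (mem_longLegPairs.1 hp).1, .inr (mem_longLegPairs.1 hp).1]

theorem eq_of_reachable_of_not_touchesLongLeg {v w : ModelVertex k r L}
    (hv : ¬TouchesLongLeg k r L v.1) (h : (modelGraph k r L).Reachable v w) : v = w := by
  obtain ⟨p⟩ := h
  cases p with
  | nil => rfl
  | cons h _ => exact absurd (touchesLongLeg_of_adj h) hv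

theorem reachable_rowHub_colHub (hL : ∀ i ≤ k, 0 ≤ L i) {x y : ℕ} (hx : x ∈ longLegs k r L)
    (hy : y ∈ longLegs k r L) (hxy : x ≠ y) :
    (modelGraph k r L).Reachable (rowHub hL hx) (colHub hL hy) :=
  let m : ModelVertex k r L :=
    ⟨(x, y), (isModelVertex_of_mem_longLegs hL hx (mem_longLegs.1 hy).1.2 hxy).1⟩
  (adj_rowHub hL hx (v := m) rfl (ne_zero_of_mem_longLegs hy)).reachable.trans
    (adj_colHub hL hy (v := m) rfl (ne_zero_of_mem_longLegs hx)).reachable.symm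

theorem reachable_rowHub_rowHub (hL : ∀ i ≤ k, 0 ≤ L i) (hB : 3 ≤ #(longLegs k r L)) {x x' : ℕ}
    (hx : x ∈ longLegs k r L) (hx' : x' ∈ longLegs k r L) :
    (modelGraph k r L).Reachable (rowHub hL hx) (rowHub hL hx') := by
  obtain ⟨z, hz⟩ : (((longLegs k r L).erase x).erase x').Nonempty := by
    have := pred_card_le_card_erase (s := longLegs k r L) (a := x)
    have := pred_card_le_card_erase (s := (longLegs k r L).erase x) (a := x')
    rw [← card_pos]
    omega
  obtain ⟨hzx', hzx, hz⟩ : z ≠ x' ∧ z ≠ x ∧ z ∈ longLegs k r L := by simpa using hz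
  exact (reachable_rowHub_colHub hL hx hz hzx.symm).trans
    (reachable_rowHub_colHub hL hx' hz hzx'.symm).symm

theorem reachable_rowHub_of_touchesLongLeg (hL : ∀ i ≤ k, 0 ≤ L i)
    (hB : 3 ≤ #(longLegs k r L)) {v : ModelVertex k r L} (hv : TouchesLongLeg k r L v.1) {x : ℕ}
    (hx : x ∈ longLegs k r L) : (modelGraph k r L).Reachable v (rowHub hL hx) := by
  rcases hv with hv | hv
  · refine Reachable.trans ?_ (reachable_rowHub_rowHub hL hB hv hx)
    by_cases h0 : v.1.2 = 0
    · exact (Subtype.ext (Prod.ext rfl h0) : v = rowHub hL hv) ▸ .rfl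
    · exact (adj_rowHub hL hv rfl h0).reachable.symm
  · obtain ⟨z, hz, hzv⟩ := exists_mem_ne (by omega : 1 < #(longLegs k r L)) v.1.2
    refine Reachable.trans ?_ ((reachable_rowHub_colHub hL hz hv hzv).symm.trans
      (reachable_rowHub_rowHub hL hB hz hx))
    by_cases h0 : v.1.1 = 0
    · exact (Subtype.ext (Prod.ext h0 rfl) : v = colHub hL hv) ▸ .rfl
    · exact (adj_colHub hL hv rfl h0).reachable.symm

theorem natCard_connectedComponent (hL0 : L 0 = 0) (hL : ∀ i ≤ k, 0 ≤ L i)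
    (hB : 3 ≤ #(longLegs k r L)) :
    Nat.card (modelGraph k r L).ConnectedComponent =
      #(admissiblePairs r L (Icc 1 k \ longLegs k r L)) + 1 := by
  obtain ⟨x₀, hx₀⟩ : (longLegs k r L).Nonempty := card_pos.1 (by omega)
  let T := {v : ModelVertex k r L // ¬TouchesLongLeg k r L v.1}
  let G := modelGraph k r L
  let F : Option T → G.ConnectedComponent := fun o =>
    o.elim (G.connectedComponentMk (rowHub hL hx₀)) fun v => G.connectedComponentMk v.1
  have hF : Function.Bijective F := by
    constructor
    · rintro (_ | ⟨v, hv⟩) (_ | ⟨w, hw⟩) h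
      · rfl
      · obtain rfl := eq_of_reachable_of_not_touchesLongLeg hw (ConnectedComponent.exact h).symm
        exact absurd (.inl hx₀) hw
      · obtain rfl := eq_of_reachable_of_not_touchesLongLeg hv (ConnectedComponent.exact h)
        exact absurd (.inl hx₀) hv
      · obtain rfl := eq_of_reachable_of_not_touchesLongLeg hv (ConnectedComponent.exact h)
        rfl
    · intro c
      induction c using ConnectedComponent.ind with
      | h v =>
        by_cases hv : TouchesLongLeg k r L v.1
        · exact ⟨none, ConnectedComponent.sound
            (reachable_rowHub_of_touchesLongLeg hL hB hv hx₀).symm⟩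
        · exact ⟨some ⟨v, hv⟩, rfl⟩
  let e : T ≃ admissiblePairs r L (Icc 1 k \ longLegs k r L) :=
    (Equiv.subtypeSubtypeEquivSubtypeInter (IsModelVertex k r L) _).trans
      (Equiv.subtypeEquivRight fun _ => isModelVertex_and_not_touchesLongLeg_iff hL0)
  rw [← Nat.card_eq_of_bijective F hF, Nat.card_congr e.optionCongr, Finite.card_option,
    Nat.card_eq_finsetCard]

theorem shortPairs_sdiff_longLegs (hL : ∀ i ≤ k, 0 ≤ L i) :
    shortPairs r L (Icc 1 k \ longLegs k r L) = shortPairs r L (Icc 1 k) := by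
  ext ⟨x, y⟩
  simp only [shortPairs, mem_filter, mem_offDiag, mem_sdiff, mem_Icc, mem_longLegs]
  have := hL x
  have := hL y
  grind

theorem longLegs_eq_one_two_three (hk : 3 ≤ k)
    (hmono : ∀ i j, 2 ≤ i → i ≤ j → j ≤ k → L j ≤ L i) (hL4 : L 4 < r) (hL3 : r ≤ L 3)
    (hL1 : r ≤ L 1) : longLegs k r L = {1, 2, 3} := by
  have hL2 := hmono 2 3 le_rfl (by norm_num) hk
  ext x
  simp only [mem_longLegs, mem_insert, mem_singleton]
  constructor
  · rintro ⟨⟨hx1, hxk⟩, hx⟩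
    by_contra hx4
    linarith [hmono 4 x (by norm_num) (by omega) hxk]
  · rintro (rfl | rfl | rfl)
    exacts [⟨⟨le_rfl, by omega⟩, hL1⟩, ⟨⟨by norm_num, by omega⟩, hL3.trans hL2⟩,
      ⟨⟨by norm_num, hk⟩, hL3⟩]

end ModelGraph

theorem model_counts_middle_general (k : ℕ) (hk : 4 ≤ k) (r : ℝ) (L : ℕ → ℝ)
    (hL0 : L 0 = 0) (hLpos : ∀ i, 1 ≤ i → i ≤ k → 0 < L i)
    (hmono : ∀ i j, 2 ≤ i → i ≤ j → j ≤ k → L j ≤ L i)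
    (hL4 : L 4 < r) (hL3 : r ≤ L 3) (hL1 : r ≤ L 1) :
    (Nat.card (ModelVertex k r L) : ℤ)
        = (k : ℤ) * ((k : ℤ) - 1) + 6 - 2 * (pairCount k r L : ℤ) ∧
    Nat.card (modelGraph k r L).edgeSet = 6 * (k - 1) ∧
    (Nat.card (modelGraph k r L).ConnectedComponent : ℤ)
        = ((k : ℤ) - 3) * ((k : ℤ) - 4) + 1 - 2 * (pairCount k r L : ℤ) ∧
    (Nat.card (modelGraph k r L).edgeSet : ℤ) - (Nat.card (ModelVertex k r L) : ℤ)
      + (Nat.card (modelGraph k r L).ConnectedComponent : ℤ) = 1 := by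
  have hL : ∀ i ≤ k, 0 ≤ L i := fun i hi =>
    i.eq_zero_or_pos.elim (fun h => h ▸ hL0.ge) fun h => (hLpos i h hi).le
  have hb : #(longLegs k r L) = 3 := by rw [longLegs_eq_one_two_three (by omega) hmono hL4 hL3 hL1]; rfl
  have hcompl : #(Icc 1 k \ longLegs k r L) + 3 = k := by
    rw [← hb, card_sdiff_add_card_eq_card longLegs_subset_Icc, Nat.card_Icc, Nat.add_sub_cancel]
  have hv := natCard_modelVertex (k := k) (r := r) hL0
  have he := natCard_edgeSet (r := r) hL
  have hc := natCard_connectedComponent hL0 hL hb.ge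
  have hpairs := card_admissiblePairs_add_card_shortPairs r L (Icc 1 k)
  have hpairs' := card_admissiblePairs_add_card_shortPairs r L (Icc 1 k \ longLegs k r L)
  rw [card_shortPairs_Icc, Nat.card_Icc, Nat.add_sub_cancel] at hpairs
  rw [shortPairs_sdiff_longLegs hL, card_shortPairs_Icc] at hpairs'
  rw [hb] at hv he
  have he' : Nat.card (modelGraph k r L).edgeSet = 6 * (k - 1) := by omega
  zify at hv hc hpairs hpairs' hcompl
  rw [eq_sub_of_add_eq hcompl] at hpairs'
  refine ⟨by linear_combination hv + hpairs, he', by linear_combination hc + hpairs', ?_⟩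
  rw [he']
  push_cast [Nat.one_le_iff_ne_zero.2 (by omega : k ≠ 0)]
  linear_combination hc + hpairs' - hv - hpairs

/-- if `4 ≤ k`, `L 2 ≥ ⋯ ≥ L k`, `L 4 < r ≤ L 3` and `r ≤ L 1`, then
`(G_k)_{r,L}` has `k(k−1) + 6 − 2h` vertices, `6(k−1)` edges and `(k−3)(k−4) + 1 − 2h`
connected components; in particular `e − v + c = 1`. -/
theorem model_counts_middle (k : ℕ) (hk : 4 ≤ k) (r : ℝ) (hr : 0 < r) (L : ℕ → ℝ)
    (hL0 : L 0 = 0) (hLpos : ∀ i, 1 ≤ i → i ≤ k → 0 < L i)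
    (hmono : ∀ i j, 2 ≤ i → i ≤ j → j ≤ k → L j ≤ L i)
    (hL4 : L 4 < r) (hL3 : r ≤ L 3) (hL1 : r ≤ L 1) :
    (Nat.card (ModelVertex k r L) : ℤ)
        = (k : ℤ) * ((k : ℤ) - 1) + 6 - 2 * (pairCount k r L : ℤ) ∧
    Nat.card (modelGraph k r L).edgeSet = 6 * (k - 1) ∧
    (Nat.card (modelGraph k r L).ConnectedComponent : ℤ)
        = ((k : ℤ) - 3) * ((k : ℤ) - 4) + 1 - 2 * (pairCount k r L : ℤ) ∧
    (Nat.card (modelGraph k r L).edgeSet : ℤ) - (Nat.card (ModelVertex k r L) : ℤ)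
      + (Nat.card (modelGraph k r L).ConnectedComponent : ℤ) = 1 :=
  model_counts_middle_general k hk r L hL0 hLpos hmono hL4 hL3 hL1
end

section
/- Let k ≥ 4 and let 0 < r ≤ r'. Assume that for every i ∈ {1,…,k} one has (L_i ≥ r ⟺ L_i ≥ r'), and that for every i ∈ {2,…,k} one has (L_1 + L_i ≥ r ⟺ L_1 + L_i ≥ r'). Then e((G_k)_{r,L}) − v((G_k)_{r,L}) + c((G_k)_{r,L}) = e((G_k)_{r',L}) − v((G_k)_{r',L}) + c((G_k)_{r',L}). -/
namespace SimpleGraph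

variable {V W : Type*} {G : SimpleGraph V} {H : SimpleGraph W}

/-- The first Betti number of the graph. -/
noncomputable def cycleRank (G : SimpleGraph V) : ℤ :=
  Nat.card G.edgeSet - Nat.card V + Nat.card G.ConnectedComponent

lemma eq_of_reachable_of_notMem_support {u v : V} (h : G.Reachable u v) (hu : u ∉ G.support) :
    u = v := by
  by_contra huv
  exact hu (mem_support_of_reachable huv h)

namespace Embedding

variable (f : H ↪g G) (hf : G.support ⊆ Set.range f)
include hf

lemma reachable_of_reachable_map {a b : W} (h : G.Reachable (f a) (f b)) : H.Reachable a b := by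
  rw [reachable_iff_reflTransGen] at h
  suffices ∀ x, Relation.ReflTransGen G.Adj (f a) x → ∃ c, f c = x ∧ H.Reachable a c by
    obtain ⟨c, hc, hac⟩ := this _ h
    exact f.injective hc ▸ hac
  intro x hx
  induction hx with
  | refl => exact ⟨a, rfl, .rfl⟩
  | tail _ hxy ih =>
    obtain ⟨c, rfl, hac⟩ := ih
    obtain ⟨d, rfl⟩ := hf ⟨_, hxy.symm⟩
    exact ⟨d, rfl, hac.trans (f.map_adj_iff.mp hxy).reachable⟩

lemma mapEdgeSet_surjective_of_support_subset_range : Function.Surjective f.mapEdgeSet := by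
  rintro ⟨e, he⟩
  induction e with
  | h u v =>
    obtain ⟨a, rfl⟩ := hf ⟨v, he⟩
    obtain ⟨b, rfl⟩ := hf ⟨f a, G.adj_symm he⟩
    exact ⟨⟨s(a, b), f.map_adj_iff.mp he⟩, rfl⟩

lemma connectedComponentMap_sumElim_bijective :
    Function.Bijective (Sum.elim (ConnectedComponent.map f.toHom)
      (fun t : ↥(Set.range f)ᶜ => G.connectedComponentMk t)) := by
  have hiso : ∀ t : ↥(Set.range f)ᶜ, (t : V) ∉ G.support := fun t ht => t.2 (hf ht)
  refine ⟨Function.Injective.sumElim ?_ ?_ ?_, ?_⟩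
  · rintro ⟨a⟩ ⟨b⟩ hab
    exact ConnectedComponent.sound
      (f.reachable_of_reachable_map hf (ConnectedComponent.exact hab))
  · rintro t s hts
    exact Subtype.ext (eq_of_reachable_of_notMem_support (ConnectedComponent.exact hts) (hiso t))
  · rintro ⟨a⟩ t hat
    exact t.2 ⟨a, (eq_of_reachable_of_notMem_support
      (ConnectedComponent.exact hat).symm (hiso t)).symm⟩
  · rintro ⟨v⟩
    by_cases hv : v ∈ Set.range f
    · obtain ⟨a, rfl⟩ := hv
      exact ⟨.inl (H.connectedComponentMk a), rfl⟩
    · exact ⟨.inr ⟨v, hv⟩, rfl⟩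

theorem cycleRank_eq_of_support_subset_range [Finite V] : G.cycleRank = H.cycleRank := by
  have : Finite W := Finite.of_injective f f.injective
  have hv : Nat.card V = Nat.card W + Nat.card ↥(Set.range f)ᶜ := by
    classical
    rw [Nat.card_congr (Equiv.ofInjective f f.injective), ← Nat.card_sum]
    exact (Nat.card_congr (Equiv.sumCompl (· ∈ Set.range f))).symm
  have he : Nat.card H.edgeSet = Nat.card G.edgeSet :=
    Nat.card_eq_of_bijective _
      ⟨f.mapEdgeSet.injective, f.mapEdgeSet_surjective_of_support_subset_range hf⟩
  have hc : Nat.card G.ConnectedComponent =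
      Nat.card H.ConnectedComponent + Nat.card ↥(Set.range f)ᶜ := by
    rw [← Nat.card_sum]
    exact (Nat.card_eq_of_bijective _ (f.connectedComponentMap_sumElim_bijective hf)).symm
  simp only [cycleRank, hv, he, hc]
  push_cast
  ring

end Embedding

end SimpleGraph

section ModelGraph

variable {k : ℕ} {r r' : ℝ} {L : ℕ → ℝ}

instance ModelVertex.finite (k : ℕ) (r : ℝ) (L : ℕ → ℝ) : Finite (ModelVertex k r L) :=
  (((Set.finite_Iic k).prod (Set.finite_Iic k)).subset
    (fun _ hp => ⟨hp.1, hp.2.1⟩) : {p | IsModelVertex k r L p}.Finite).to_subtype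

lemma IsModelVertex.of_le (hrr' : r ≤ r') {p : ℕ × ℕ} (hp : IsModelVertex k r' L p) :
    IsModelVertex k r L p :=
  ⟨hp.1, hp.2.1, hp.2.2.1, hrr'.trans hp.2.2.2⟩

lemma modelAdj_iff_of_thresholds (hthr : ∀ i ≤ k, (r ≤ L i ↔ r' ≤ L i)) {a : ℕ × ℕ}
    (ha₁ : a.1 ≤ k) (ha₂ : a.2 ≤ k) (b : ℕ × ℕ) : ModelAdj r L a b ↔ ModelAdj r' L a b := by
  rw [ModelAdj, ModelAdj, hthr _ ha₁, hthr _ ha₂]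

lemma IsModelVertex.of_modelAdj (hL : ∀ i ≤ k, 0 ≤ L i)
    (hthr : ∀ i ≤ k, (r ≤ L i ↔ r' ≤ L i)) {a b : ℕ × ℕ} (ha : IsModelVertex k r L a)
    (hab : ModelAdj r L a b) : IsModelVertex k r' L a := by
  refine ⟨ha.1, ha.2.1, ha.2.2.1, ?_⟩
  rcases hab with ⟨-, -, h⟩ | ⟨-, -, h⟩
  · linarith [(hthr _ ha.1).mp h, hL _ ha.2.1]
  · linarith [(hthr _ ha.2.1).mp h, hL _ ha.1]

def modelGraphEmbedding (hrr' : r ≤ r') (hthr : ∀ i ≤ k, (r ≤ L i ↔ r' ≤ L i)) :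
    modelGraph k r' L ↪g modelGraph k r L where
  toFun v := ⟨v.1, v.2.of_le hrr'⟩
  inj' _ _ h := Subtype.ext (Subtype.mk.inj h)
  map_rel_iff' {v w} := modelAdj_iff_of_thresholds hthr v.2.1 v.2.2.1 w.1

lemma support_modelGraph_subset_range (hL : ∀ i ≤ k, 0 ≤ L i) (hrr' : r ≤ r')
    (hthr : ∀ i ≤ k, (r ≤ L i ↔ r' ≤ L i)) :
    (modelGraph k r L).support ⊆ Set.range (modelGraphEmbedding hrr' hthr) := by
  rintro v ⟨w, hvw⟩
  exact ⟨⟨v.1, v.2.of_modelAdj hL hthr hvw⟩, rfl⟩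

end ModelGraph

theorem model_euler_invariant_r_general (k : ℕ) (r r' : ℝ) (hr : 0 < r) (hrr' : r ≤ r')
    (L : ℕ → ℝ) (hL0 : L 0 = 0) (hLpos : ∀ i, 1 ≤ i → i ≤ k → 0 < L i)
    (hthr1 : ∀ i, 1 ≤ i → i ≤ k → (r ≤ L i ↔ r' ≤ L i)) :
    (Nat.card (modelGraph k r L).edgeSet : ℤ) - (Nat.card (ModelVertex k r L) : ℤ)
      + (Nat.card (modelGraph k r L).ConnectedComponent : ℤ)
    = (Nat.card (modelGraph k r' L).edgeSet : ℤ) - (Nat.card (ModelVertex k r' L) : ℤ)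
      + (Nat.card (modelGraph k r' L).ConnectedComponent : ℤ) := by
  have hL : ∀ i ≤ k, 0 ≤ L i := fun i hi => by
    rcases Nat.eq_zero_or_pos i with rfl | hi₁
    · exact hL0.ge
    · exact (hLpos i hi₁ hi).le
  have hthr : ∀ i ≤ k, (r ≤ L i ↔ r' ≤ L i) := fun i hi => by
    rcases Nat.eq_zero_or_pos i with rfl | hi₁
    · constructor <;> intro h <;> linarith
    · exact hthr1 i hi₁ hi
  exact (modelGraphEmbedding hrr' hthr).cycleRank_eq_of_support_subset_range
    (support_modelGraph_subset_range hL hrr' hthr)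

/-- if `4 ≤ k`, `0 < r ≤ r'`, and neither any threshold `L i ≥ r`
(`i ∈ {1,…,k}`) nor any threshold `L 1 + L i ≥ r` (`i ∈ {2,…,k}`) changes between `r`
and `r'`, then `e − v + c` is the same for `(G_k)_{r,L}` and `(G_k)_{r',L}`. -/
theorem model_euler_invariant_r (k : ℕ) (hk : 4 ≤ k) (r r' : ℝ) (hr : 0 < r) (hrr' : r ≤ r')
    (L : ℕ → ℝ) (hL0 : L 0 = 0) (hLpos : ∀ i, 1 ≤ i → i ≤ k → 0 < L i)
    (hthr1 : ∀ i, 1 ≤ i → i ≤ k → (r ≤ L i ↔ r' ≤ L i))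
    (hthr2 : ∀ i, 2 ≤ i → i ≤ k → (r ≤ L 1 + L i ↔ r' ≤ L 1 + L i)) :
    (Nat.card (modelGraph k r L).edgeSet : ℤ) - (Nat.card (ModelVertex k r L) : ℤ)
      + (Nat.card (modelGraph k r L).ConnectedComponent : ℤ)
    = (Nat.card (modelGraph k r' L).edgeSet : ℤ) - (Nat.card (ModelVertex k r' L) : ℤ)
      + (Nat.card (modelGraph k r' L).ConnectedComponent : ℤ) :=
  model_euler_invariant_r_general k r r' hr hrr' L hL0 hLpos hthr1
end

section
/- Let G be a finite connected simple graph with at least two vertices, equipped with a vertex weight function w : V(G) → ℝ_{≥0}, and let v₀ be a vertex of G with w(v₀) = min over all vertices of w. Let H be the induced subgraph of G on V(G) \ {v₀}, and assume H is connected. Then every biased spanning tree of H extends to a biased spanning tree of G; that is, for every biased spanning tree T'' of H there exists a biased spanning tree T* of G whose edge set contains the edge set of T''. -/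
/-!
Let `S = V \ {v₀}`. Restricting a spanning tree `T` of `G` to `S` gives a forest `F`; every
edge of `T` outside `F` meets `v₀` and so has priority `w v₀`, the least possible one. Extending
`F` to a spanning tree `T₃` of `G - v₀` adds one edge fewer than `T` has outside `F`, each of
priority at least `w v₀`, hence `p(T) ≤ p(T₃) + w v₀ ≤ p(T'') + w v₀`. Conversely, `T''`
extends (as an acyclic subgraph of the connected graph `G`) to a spanning tree of `G` with one
more edge, of priority at least `w v₀`, which therefore attains this bound.
-/

open scoped BigOperators

/-- The priority of an edge: the minimum of the weights of its two endpoints. -/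
noncomputable def edgePriority {V : Type*} (w : V → ℝ) : Sym2 V → ℝ :=
  Sym2.lift ⟨fun u v => min (w u) (w v), fun u v => min_comm (w u) (w v)⟩

/-- `T` is a spanning tree of the induced subgraph of `G` on the vertex set `S`:
it is a subgraph of `G` whose vertex set is exactly `S` and which is a tree. -/
def IsSpanningTreeOn {V : Type*} {G : SimpleGraph V} (S : Set V) (T : G.Subgraph) : Prop :=
  T.verts = S ∧ T.coe.IsTree

/-- The total edge priority of a subgraph. -/
noncomputable def totalPriority {V : Type*} {G : SimpleGraph V} (w : V → ℝ)
    (T : G.Subgraph) : ℝ :=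
  ∑ᶠ e ∈ T.edgeSet, edgePriority w e

/-- A biased spanning tree (of the induced subgraph of `G` on `S`): a spanning tree
maximizing the total edge priority among all such spanning trees. -/
def IsBiasedSpanningTreeOn {V : Type*} {G : SimpleGraph V} (w : V → ℝ) (S : Set V)
    (T : G.Subgraph) : Prop :=
  IsSpanningTreeOn S T ∧
    ∀ T' : G.Subgraph, IsSpanningTreeOn S T' → totalPriority w T' ≤ totalPriority w T

namespace SimpleGraph

variable {V W : Type*}

lemma Walk.support_subset_range_of_map {G : SimpleGraph V} (f : V ↪ W) {u v : W}
    (p : (G.map f).Walk u v) (hv : v ∈ Set.range f) : ∀ x ∈ p.support, x ∈ Set.range f := by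
  induction p with
  | nil => simpa using hv
  | cons h q ih =>
    obtain ⟨a, _, -, rfl, -⟩ := (map_adj f G _ _).mp h
    simpa using ih hv

lemma IsAcyclic.map {G : SimpleGraph V} (f : V ↪ W) (h : G.IsAcyclic) : (G.map f).IsAcyclic := by
  have hrange : ((G.map f).induce (Set.range f)).IsAcyclic :=
    (Embedding.map f G).isoInduceRange.isAcyclic_iff.mp h
  intro v c hc
  have hv : v ∈ Set.range f := by
    cases c with
    | nil => exact absurd rfl hc.ne_nil
    | cons h _ => obtain ⟨a, _, -, rfl, -⟩ := (map_adj f G _ _).mp h; exact ⟨a, rfl⟩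
  have hsupp := c.support_subset_range_of_map f hv
  refine hrange (c.induce _ hsupp) ?_
  rwa [← Walk.isCycle_map_iff_of_injective (f := (Embedding.induce (Set.range f)).toHom)
    Subtype.val_injective, Walk.map_induce]

lemma Subgraph.isAcyclic_spanningCoe {G : SimpleGraph V} {H : G.Subgraph} (h : H.coe.IsAcyclic) :
    H.spanningCoe.IsAcyclic := by
  rw [← H.spanningCoe_coe]
  exact h.map _

lemma Subgraph.exists_notMem_of_mem_edgeSet_sdiff_induce {G : SimpleGraph V} {H : G.Subgraph}
    {s : Set V} {e : Sym2 V} (he : e ∈ H.edgeSet \ (H.induce s).edgeSet) :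
    ∃ v ∈ e, v ∉ s := by
  induction e using Sym2.ind with
  | _ a b =>
    by_contra! hs
    exact he.2 ⟨hs a (Sym2.mem_mk_left a b), hs b (Sym2.mem_mk_right a b), he.1⟩

end SimpleGraph

open SimpleGraph

lemma Set.Finite.ncard_nsmul_le_finsum_mem {α M : Type*} [AddCommMonoid M] [Preorder M]
    [AddLeftMono M] {s : Set α} (hs : s.Finite) {f : α → M} {c : M}
    (h : ∀ a ∈ s, c ≤ f a) :
    s.ncard • c ≤ ∑ᶠ a ∈ s, f a := by
  rw [finsum_mem_eq_finite_toFinset_sum _ hs, Set.ncard_eq_toFinset_card s hs]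
  exact Finset.card_nsmul_le_sum _ _ _ (by simpa using h)

lemma Set.Finite.finsum_mem_le_ncard_nsmul {α M : Type*} [AddCommMonoid M] [Preorder M]
    [AddLeftMono M] {s : Set α} (hs : s.Finite) {f : α → M} {c : M}
    (h : ∀ a ∈ s, f a ≤ c) :
    ∑ᶠ a ∈ s, f a ≤ s.ncard • c := by
  rw [finsum_mem_eq_finite_toFinset_sum _ hs, Set.ncard_eq_toFinset_card s hs]
  exact Finset.sum_le_card_nsmul _ _ _ (by simpa using h)

lemma Set.ncard_setOf_ne_add_one {V : Type*} [Finite V] (v₀ : V) :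
    {v | v ≠ v₀}.ncard + 1 = Nat.card V := by
  have h := Set.ncard_add_ncard_compl {v₀}
  rwa [Set.ncard_singleton, add_comm] at h

section

variable {V : Type*} {G : SimpleGraph V}

lemma exists_isSpanningTreeOn_le {S : Set V} (hS : (G.induce S).Connected)
    {F : G.Subgraph} (hFS : F.verts ⊆ S) (hF : F.coe.IsAcyclic) :
    ∃ T : G.Subgraph, IsSpanningTreeOn S T ∧ F ≤ T := by
  obtain ⟨B, hFB, hBG, hB⟩ := hS.exists_isTree_le_of_le_of_isAcyclic
    (comap_monotone _ F.spanningCoe_le)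
    ((Subgraph.isAcyclic_spanningCoe hF).induce S)
  have hBG' : B.spanningCoe ≤ G := (map_monotone _ hBG).trans (spanningCoe_induce_le G S)
  refine ⟨(G.toSubgraph B.spanningCoe hBG').induce S, ⟨rfl, ?_⟩, ?_⟩
  · have hcoe : ((G.toSubgraph B.spanningCoe hBG').induce S).coe = B := by
      ext x y
      simp only [Subgraph.coe_adj, Subgraph.induce_adj, toSubgraph_adj, map_adj,
        Function.Embedding.subtype_apply, Subtype.exists, exists_and_right, exists_eq_right_right,
        exists_eq_right]
      exact ⟨fun ⟨_, _, _, _, h⟩ ↦ h, fun h ↦ ⟨x.2, y.2, x.2, y.2, h⟩⟩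
    rwa [hcoe]
  · refine ⟨hFS, fun a b hab ↦ ?_⟩
    have ha := hFS (F.edge_vert hab)
    have hb := hFS (F.edge_vert hab.symm)
    exact ⟨ha, hb, (map_adj _ _ _ _).mpr ⟨⟨a, ha⟩, ⟨b, hb⟩, hFB hab, rfl, rfl⟩⟩

lemma IsSpanningTreeOn.ncard_edgeSet_add_one [Finite V] {S : Set V} {T : G.Subgraph}
    (hT : IsSpanningTreeOn S T) : T.edgeSet.ncard + 1 = S.ncard := by
  rw [← hT.1, ← T.image_coe_edgeSet_coe,
    Set.ncard_image_of_injective _ (Sym2.map.injective Subtype.val_injective),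
    ← Nat.card_coe_set_eq, ← Nat.card_coe_set_eq]
  exact (isTree_iff_connected_and_card.mp hT.2).2

lemma edgePriority_le_of_mem (w : V → ℝ) {v : V} {e : Sym2 V} (hv : v ∈ e) :
    edgePriority w e ≤ w v := by
  induction e using Sym2.ind with
  | _ a b =>
    rcases Sym2.mem_iff.mp hv with rfl | rfl
    exacts [min_le_left _ _, min_le_right _ _]

lemma le_edgePriority {w : V → ℝ} {v₀ : V} (hv₀ : ∀ v, w v₀ ≤ w v) (e : Sym2 V) :
    w v₀ ≤ edgePriority w e := by
  induction e using Sym2.ind with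
  | _ a b => exact le_min (hv₀ a) (hv₀ b)

lemma totalPriority_add_finsum_sdiff [Finite V] (w : V → ℝ) {X Y : G.Subgraph} (h : X ≤ Y) :
    totalPriority w X + ∑ᶠ e ∈ Y.edgeSet \ X.edgeSet, edgePriority w e = totalPriority w Y :=
  finsum_mem_add_sdiff (Subgraph.edgeSet_mono h) (Set.toFinite _)

section MinimalWeightVertex

variable [Finite V] {w : V → ℝ} {v₀ : V}

lemma totalPriority_add_le_of_le (hv₀ : ∀ v, w v₀ ≤ w v) {T'' T : G.Subgraph}
    (hT'' : IsSpanningTreeOn {v | v ≠ v₀} T'') (hT : IsSpanningTreeOn Set.univ T)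
    (hle : T'' ≤ T) :
    totalPriority w T'' + w v₀ ≤ totalPriority w T := by
  have hcount : (T.edgeSet \ T''.edgeSet).ncard = 1 := by
    have := hT''.ncard_edgeSet_add_one
    have := hT.ncard_edgeSet_add_one
    have := Set.ncard_setOf_ne_add_one v₀
    rw [Set.ncard_sdiff (Subgraph.edgeSet_mono hle)]
    simp only [Set.ncard_univ] at *
    omega
  calc totalPriority w T'' + w v₀
      = totalPriority w T'' + (T.edgeSet \ T''.edgeSet).ncard • w v₀ := by
        rw [hcount, one_nsmul]
    _ ≤ totalPriority w T'' + ∑ᶠ e ∈ T.edgeSet \ T''.edgeSet, edgePriority w e := by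
      gcongr
      exact (Set.toFinite _).ncard_nsmul_le_finsum_mem fun e _ ↦ le_edgePriority hv₀ e
    _ = totalPriority w T := totalPriority_add_finsum_sdiff w hle

lemma totalPriority_le_add_of_isSpanningTreeOn_univ (hv₀ : ∀ v, w v₀ ≤ w v)
    (hH : (G.induce {v | v ≠ v₀}).Connected) {T'' : G.Subgraph}
    (hT'' : IsBiasedSpanningTreeOn w {v | v ≠ v₀} T'') {T : G.Subgraph}
    (hT : IsSpanningTreeOn Set.univ T) :
    totalPriority w T ≤ totalPriority w T'' + w v₀ := by
  set F := T.induce {v | v ≠ v₀}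
  have hFT : F ≤ T := calc
    F ≤ T.induce T.verts := Subgraph.induce_mono_right (hT.1 ▸ Set.subset_univ _)
    _ = T := T.induce_self_verts
  have hF : F.coe.IsAcyclic :=
    hT.2.isAcyclic.comap (Subgraph.inclusion hFT) (Subgraph.inclusion.injective hFT)
  obtain ⟨T₃, hT₃, hFT₃⟩ := exists_isSpanningTreeOn_le hH subset_rfl hF
  have hcount : (T.edgeSet \ F.edgeSet).ncard = (T₃.edgeSet \ F.edgeSet).ncard + 1 := by
    have := hT.ncard_edgeSet_add_one
    have := hT₃.ncard_edgeSet_add_one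
    have := Set.ncard_setOf_ne_add_one v₀
    have := Set.ncard_le_ncard (Subgraph.edgeSet_mono hFT₃)
    rw [Set.ncard_sdiff (Subgraph.edgeSet_mono hFT), Set.ncard_sdiff (Subgraph.edgeSet_mono hFT₃)]
    simp only [Set.ncard_univ] at *
    omega
  have hout : ∀ e ∈ T.edgeSet \ F.edgeSet, edgePriority w e ≤ w v₀ := fun e he ↦ by
    obtain ⟨v, hv, hvS⟩ := Subgraph.exists_notMem_of_mem_edgeSet_sdiff_induce he
    exact not_not.mp hvS ▸ edgePriority_le_of_mem w hv
  calc totalPriority w T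
      = totalPriority w F + ∑ᶠ e ∈ T.edgeSet \ F.edgeSet, edgePriority w e :=
        (totalPriority_add_finsum_sdiff w hFT).symm
    _ ≤ totalPriority w F + (T.edgeSet \ F.edgeSet).ncard • w v₀ := by
      gcongr
      exact (Set.toFinite _).finsum_mem_le_ncard_nsmul hout
    _ = totalPriority w F + (T₃.edgeSet \ F.edgeSet).ncard • w v₀ + w v₀ := by
      rw [hcount, succ_nsmul, add_assoc]
    _ ≤ totalPriority w F + ∑ᶠ e ∈ T₃.edgeSet \ F.edgeSet, edgePriority w e + w v₀ := by
      gcongr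
      exact (Set.toFinite _).ncard_nsmul_le_finsum_mem fun e _ ↦ le_edgePriority hv₀ e
    _ = totalPriority w T₃ + w v₀ := by rw [totalPriority_add_finsum_sdiff w hFT₃]
    _ ≤ totalPriority w T'' + w v₀ := by grw [hT''.2 T₃ hT₃]

end MinimalWeightVertex

end

theorem biased_spanning_tree_extension_general
    {V : Type*} [Fintype V] (G : SimpleGraph V) (hG : G.Connected)
    (w : V → ℝ)
    (v₀ : V) (hv₀ : ∀ v, w v₀ ≤ w v)
    (hH : (G.induce {v : V | v ≠ v₀}).Connected)
    (T'' : G.Subgraph) (hT'' : IsBiasedSpanningTreeOn w {v : V | v ≠ v₀} T'') :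
    ∃ T : G.Subgraph, IsBiasedSpanningTreeOn w Set.univ T ∧ T''.edgeSet ⊆ T.edgeSet := by
  obtain ⟨T, hT, hle⟩ := exists_isSpanningTreeOn_le ((induceUnivIso G).connected_iff.mpr hG)
    (Set.subset_univ T''.verts) hT''.1.2.isAcyclic
  refine ⟨T, ⟨hT, fun T' hT' ↦ ?_⟩, Subgraph.edgeSet_mono hle⟩
  calc totalPriority w T'
      ≤ totalPriority w T'' + w v₀ :=
        totalPriority_le_add_of_isSpanningTreeOn_univ hv₀ hH hT'' hT'
    _ ≤ totalPriority w T := totalPriority_add_le_of_le hv₀ hT''.1 hT hle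

/-- if `v₀` has minimal weight and `G − v₀` is connected, then every biased
spanning tree of `G − v₀` extends to a biased spanning tree of `G`. -/
theorem biased_spanning_tree_extension
    {V : Type*} [Fintype V] (G : SimpleGraph V) (hG : G.Connected)
    (hcard : 2 ≤ Fintype.card V)
    (w : V → ℝ) (hw : ∀ v, 0 ≤ w v)
    (v₀ : V) (hv₀ : ∀ v, w v₀ ≤ w v)
    (hH : (G.induce {v : V | v ≠ v₀}).Connected)
    (T'' : G.Subgraph) (hT'' : IsBiasedSpanningTreeOn w {v : V | v ≠ v₀} T'') :
    ∃ T : G.Subgraph, IsBiasedSpanningTreeOn w Set.univ T ∧ T''.edgeSet ⊆ T.edgeSet :=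
  biased_spanning_tree_extension_general G hG w v₀ hv₀ hH T'' hT''
end

section
/- Let k ≥ 4, suppose L_2 ≥ L_3 ≥ ⋯ ≥ L_k, L_4 < r ≤ L_3, and L_1 < r ≤ L_1 + L_k. Then the model graph (G_k)_{r,L} has exactly k(k−1) + 4 − 2h vertices, exactly 4(k−1) edges, and exactly (k−2)(k−3) + 2 − 2h connected components; in particular e((G_k)_{r,L}) − v((G_k)_{r,L}) + c((G_k)_{r,L}) = 0. -/
open Finset SimpleGraph

theorem SimpleGraph.card_connectedComponent_eq_ncard_range {V α : Type*} {G : SimpleGraph V}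
    (f : V → α) (hadj : ∀ ⦃u v⦄, G.Adj u v → f u = f v)
    (hreach : ∀ ⦃u v⦄, f u = f v → G.Reachable u v) :
    Nat.card G.ConnectedComponent = (Set.range f).ncard := by
  have hwalk : ∀ {u v} (p : G.Walk u v), f u = f v := by
    intro u v p
    induction p with
    | nil => rfl
    | cons huv _ ih => exact (hadj huv).trans ih
  let F : G.ConnectedComponent → α := ConnectedComponent.lift f fun _ _ p _ => hwalk p
  have hF : Function.Injective F :=
    ConnectedComponent.ind₂ fun _ _ huv => ConnectedComponent.sound (hreach huv)
  have hrange : Set.range F = Set.range f := by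
    ext x
    exact ⟨fun ⟨c, hc⟩ => c.ind (β := fun c => F c = x → x ∈ Set.range f)
      (fun v hv => ⟨v, hv⟩) hc, fun ⟨v, hv⟩ => ⟨G.connectedComponentMk v, hv⟩⟩
  rw [← hrange, Set.ncard_range_of_injective hF]

section ModelGraph

variable {k : ℕ} {r : ℝ} {L : ℕ → ℝ}

theorem IsModelVertex.swap {p : ℕ × ℕ} (hp : IsModelVertex k r L p) :
    IsModelVertex k r L p.swap :=
  ⟨hp.2.1, hp.1, hp.2.2.1.symm, hp.2.2.2.trans_eq (add_comm _ _)⟩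

theorem isModelVertex_of_long_fst (hL : ∀ i ≤ k, 0 ≤ L i) {c y : ℕ} (hck : c ≤ k)
    (hc : r ≤ L c) (hy : y ≤ k) (hcy : c ≠ y) : IsModelVertex k r L (c, y) :=
  ⟨hck, hy, hcy, le_add_of_le_of_nonneg hc (hL y hy)⟩

namespace ModelVertex

instance : Finite (ModelVertex k r L) :=
  Set.Finite.to_subtype (s := {p | IsModelVertex k r L p}) <|
    ((Set.finite_Iic k).prod (Set.finite_Iic k)).subset fun _ hp => ⟨hp.1, hp.2.1⟩

def IsHub (v : ModelVertex k r L) : Prop := v.val.1 = 0 ∨ v.val.2 = 0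

instance : DecidablePred (IsHub (k := k) (r := r) (L := L)) :=
  fun v => inferInstanceAs (Decidable (v.val.1 = 0 ∨ v.val.2 = 0))

def swap : ModelVertex k r L ≃ ModelVertex k r L :=
  Function.Involutive.toPerm (fun v => ⟨v.val.swap, v.2.swap⟩) fun _ => rfl

end ModelVertex

def modelGraphSwap : modelGraph k r L ≃g modelGraph k r L where
  toEquiv := ModelVertex.swap
  map_rel_iff' := by
    intro v w
    change ModelAdj r L v.val.swap w.val.swap ↔ ModelAdj r L v.val w.val
    simp only [ModelAdj, Prod.fst_swap, Prod.snd_swap]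
    exact or_comm

theorem modelGraph_adj_iff_of_val_eq_mk_zero {c : ℕ} (hc : r ≤ L c) {v w : ModelVertex k r L}
    (hv : v.val = (c, 0)) : (modelGraph k r L).Adj v w ↔ w.val.1 = c ∧ w.val.2 ≠ 0 := by
  obtain ⟨⟨x, y⟩, hw⟩ := w
  have hc0 : c ≠ 0 := by simpa [hv] using v.2.2.2.1
  have hxy : x ≠ y := hw.2.2.1
  change ModelAdj r L v.val (x, y) ↔ _
  simp only [ModelAdj, hv]
  constructor
  · rintro (⟨rfl, h, -⟩ | ⟨rfl, h, -⟩) <;> omega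
  · rintro ⟨rfl, hy⟩
    exact Or.inl ⟨rfl, by simpa using hy, hc⟩

theorem modelGraph_adj_iff_of_val_eq_zero_mk {c : ℕ} (hc : r ≤ L c) {v w : ModelVertex k r L}
    (hv : v.val = (0, c)) : (modelGraph k r L).Adj v w ↔ w.val.2 = c ∧ w.val.1 ≠ 0 := by
  rw [← modelGraphSwap.map_adj_iff]
  exact modelGraph_adj_iff_of_val_eq_mk_zero hc (congrArg Prod.swap hv)

theorem modelGraph_degree_of_val_eq_mk_zero (hL : ∀ i ≤ k, 0 ≤ L i) {c : ℕ} (hc : r ≤ L c)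
    {v : ModelVertex k r L} (hv : v.val = (c, 0))
    [Fintype ((modelGraph k r L).neighborSet v)] : (modelGraph k r L).degree v = k - 1 := by
  have hck : c ≤ k := by simpa [hv] using v.2.1
  have hc0 : c ≠ 0 := by simpa [hv] using v.2.2.2.1
  have hinj : Set.InjOn (fun w : ModelVertex k r L => w.val.2)
      ((modelGraph k r L).neighborSet v) := by
    intro w hw w' hw' h
    rw [mem_neighborSet, modelGraph_adj_iff_of_val_eq_mk_zero hc hv] at hw hw'
    exact Subtype.ext (Prod.ext (hw.1.trans hw'.1.symm) h)
  have himage : (fun w : ModelVertex k r L => w.val.2) '' (modelGraph k r L).neighborSet v =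
      ↑((Icc 1 k).erase c) := by
    ext y
    simp only [Set.mem_image, mem_neighborSet, modelGraph_adj_iff_of_val_eq_mk_zero hc hv,
      coe_erase, coe_Icc, Set.mem_sdiff, Set.mem_Icc, Set.mem_singleton_iff]
    constructor
    · rintro ⟨w, ⟨hw1, hw2⟩, rfl⟩
      exact ⟨⟨Nat.one_le_iff_ne_zero.mpr hw2, w.2.2.1⟩,
        fun h => w.2.2.2.1 (hw1.trans h.symm)⟩
    · rintro ⟨⟨hy1, hyk⟩, hyc⟩
      exact ⟨⟨(c, y), isModelVertex_of_long_fst hL hck hc hyk (Ne.symm hyc)⟩,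
        ⟨rfl, Nat.one_le_iff_ne_zero.mp hy1⟩, rfl⟩
  rw [← card_neighborSet_eq_degree, ← Nat.card_eq_fintype_card, Nat.card_coe_set_eq,
    ← hinj.ncard_image, himage, Set.ncard_coe_finset,
    card_erase_of_mem (mem_Icc.mpr ⟨Nat.one_le_iff_ne_zero.mpr hc0, hck⟩), Nat.card_Icc,
    Nat.add_sub_cancel]

theorem modelGraph_degree_of_isHub (hL0 : L 0 = 0) (hL : ∀ i ≤ k, 0 ≤ L i)
    {v : ModelVertex k r L} (hv : v.IsHub) [Fintype ((modelGraph k r L).neighborSet v)] :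
    (modelGraph k r L).degree v = k - 1 := by
  rcases hv with h0 | h0
  · have hswap : (ModelVertex.swap v).val = (v.val.2, 0) := Prod.ext rfl h0
    have hc : r ≤ L v.val.2 := by simpa [h0, hL0] using v.2.2.2.2
    classical
    have := Fintype.ofFinite (ModelVertex k r L)
    rw [← modelGraphSwap.degree_eq v]
    exact modelGraph_degree_of_val_eq_mk_zero hL hc hswap
  · have hc : r ≤ L v.val.1 := by simpa [h0, hL0] using v.2.2.2.2
    exact modelGraph_degree_of_val_eq_mk_zero hL hc (Prod.ext rfl h0)

theorem modelGraph_isBipartiteWith_isHub :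
    (modelGraph k r L).IsBipartiteWith {v | v.IsHub} {v | ¬ v.IsHub} where
  disjoint := Set.disjoint_left.mpr fun _ hv hv' => hv' hv
  mem_of_adj v w hvw := by
    have hv := v.2.2.2.1
    have hw := w.2.2.2.1
    simp only [ModelVertex.IsHub, Set.mem_ofPred_eq]
    rcases hvw with ⟨h1, h2, -⟩ | ⟨h1, h2, -⟩ <;> omega

noncomputable def badPairs (k : ℕ) (r : ℝ) (L : ℕ → ℝ) : Finset (ℕ × ℕ) :=
  (Icc 1 k).offDiag.filter fun p => L p.1 + L p.2 < r

theorem card_badPairs : #(badPairs k r L) = 2 * pairCount k r L := by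
  set B := badPairs k r L
  have hlt : pairCount k r L = #(B.filter fun p => p.1 < p.2) := by
    rw [pairCount, ← Set.ncard_coe_finset]
    congr 1
    ext p
    simp only [B, badPairs, Set.mem_ofPred_eq, coe_filter, mem_filter, mem_offDiag, mem_Icc]
    grind
  have hgt : #(B.filter fun p => ¬ p.1 < p.2) = #(B.filter fun p => p.1 < p.2) := by
    refine card_equiv (Equiv.prodComm ℕ ℕ) fun p => ?_
    simp only [B, badPairs, mem_filter, mem_offDiag, Equiv.prodComm_apply, Prod.fst_swap,
      Prod.snd_swap, add_comm (L p.2)]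
    grind
  rw [← card_filter_add_card_filter_not (p := fun p : ℕ × ℕ => p.1 < p.2), hgt, ← hlt]
  ring

/-- When `a` and `b` are the only long indices, the component of the hub `(a, 0)` gets the label
`(a, b)`, that of `(b, 0)` the label `(b, a)`, and every other vertex is isolated and labels
itself. -/
def componentLabel (a b : ℕ) (p : ℕ × ℕ) : ℕ × ℕ :=
  if p.1 = a ∨ p.2 = b then (a, b) else if p.1 = b ∨ p.2 = a then (b, a) else p

section componentLabel

variable {a b : ℕ} {p : ℕ × ℕ}

theorem componentLabel_eq_left_iff : componentLabel a b p = (a, b) ↔ p.1 = a ∨ p.2 = b := by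
  unfold componentLabel
  split_ifs with h1 h2
  · exact iff_of_true rfl h1
  · simp only [Prod.mk.injEq]
    omega
  · exact iff_of_false (fun h => h1 (by simp [h])) h1

theorem componentLabel_eq_right_iff (hp : p.1 ≠ p.2) :
    componentLabel a b p = (b, a) ↔ p.1 = b ∨ p.2 = a := by
  unfold componentLabel
  split_ifs with h1 h2
  · simp only [Prod.mk.injEq]
    omega
  · exact iff_of_true rfl h2
  · exact iff_of_false (fun h => h2 (by simp [h])) h2

theorem componentLabel_of_not (h1 : ¬(p.1 = a ∨ p.2 = b)) (h2 : ¬(p.1 = b ∨ p.2 = a)) :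
    componentLabel a b p = p := by
  rw [componentLabel, if_neg h1, if_neg h2]

end componentLabel

structure ExactlyTwoLong (k : ℕ) (r : ℝ) (L : ℕ → ℝ) (a b : ℕ) : Prop where
  pos : 0 < r
  L_zero : L 0 = 0
  nonneg : ∀ i ≤ k, 0 ≤ L i
  ne : a ≠ b
  long_iff : ∀ x, x ≤ k ∧ r ≤ L x ↔ x = a ∨ x = b

def hubPairs (a b : ℕ) : Finset (ℕ × ℕ) := {(a, 0), (b, 0), (0, a), (0, b)}

namespace ExactlyTwoLong

variable {a b : ℕ}

theorem symm (h : ExactlyTwoLong k r L a b) : ExactlyTwoLong k r L b a :=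
  { h with ne := h.ne.symm, long_iff := fun x => (h.long_iff x).trans or_comm }

theorem long_left (h : ExactlyTwoLong k r L a b) : a ≤ k ∧ r ≤ L a :=
  (h.long_iff a).mpr (Or.inl rfl)

theorem long_right (h : ExactlyTwoLong k r L a b) : b ≤ k ∧ r ≤ L b :=
  h.symm.long_left

theorem zero_ne_left (h : ExactlyTwoLong k r L a b) : 0 ≠ a := by
  rintro rfl
  linarith [h.long_left.2, h.L_zero, h.pos]

theorem zero_ne_right (h : ExactlyTwoLong k r L a b) : 0 ≠ b :=
  h.symm.zero_ne_left

theorem isModelVertex_zero_iff (h : ExactlyTwoLong k r L a b) (y : ℕ) :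
    IsModelVertex k r L (0, y) ↔ y = a ∨ y = b := by
  rw [← h.long_iff, IsModelVertex]
  simp only [h.L_zero, zero_add]
  constructor
  · exact fun ⟨_, hy, _, hr⟩ => ⟨hy, hr⟩
  · rintro ⟨hy, hr⟩
    refine ⟨Nat.zero_le k, hy, ?_, hr⟩
    rintro rfl
    linarith [h.L_zero, h.pos]

theorem isModelVertex_iff (h : ExactlyTwoLong k r L a b) (p : ℕ × ℕ) :
    IsModelVertex k r L p ↔ p ∈ hubPairs a b ∪ ((Icc 1 k).offDiag \ badPairs k r L) := by
  obtain ⟨x, y⟩ := p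
  have ha := h.zero_ne_left
  have hb := h.zero_ne_right
  rcases Nat.eq_zero_or_pos x with rfl | hx
  · rw [h.isModelVertex_zero_iff]
    simp [hubPairs, ha, hb]
  rcases Nat.eq_zero_or_pos y with rfl | hy
  · rw [show IsModelVertex k r L (x, 0) ↔ IsModelVertex k r L (0, x) from ⟨.swap, .swap⟩,
      h.isModelVertex_zero_iff]
    simp [hubPairs, ha, hb]
  · simp [IsModelVertex, hubPairs, badPairs, hx.ne', hy.ne', Nat.one_le_iff_ne_zero]
    tauto

theorem isModelVertex_hub (h : ExactlyTwoLong k r L a b) : IsModelVertex k r L (a, 0) :=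
  (h.isModelVertex_iff _).mpr (mem_union_left _ (by simp [hubPairs]))

theorem card_hubPairs (h : ExactlyTwoLong k r L a b) : #(hubPairs a b) = 4 := by
  have := h.zero_ne_left
  have := h.zero_ne_right
  have := h.ne
  simp [hubPairs, *, Ne.symm, card_insert_of_notMem]

theorem badPairs_subset (h : ExactlyTwoLong k r L a b) :
    badPairs k r L ⊆ (((Icc 1 k).erase a).erase b).offDiag := by
  intro p hp
  simp only [badPairs, mem_filter, mem_offDiag, mem_Icc] at hp
  obtain ⟨⟨⟨hx1, hxk⟩, ⟨hy1, hyk⟩, hxy⟩, hsum⟩ := hp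
  have hx : ¬ (p.1 = a ∨ p.1 = b) := by
    rw [← h.long_iff]
    exact fun hx => by linarith [hx.2, h.nonneg p.2 hyk]
  have hy : ¬ (p.2 = a ∨ p.2 = b) := by
    rw [← h.long_iff]
    exact fun hy => by linarith [hy.2, h.nonneg p.1 hxk]
  simp only [mem_offDiag, mem_erase, mem_Icc]
  omega

theorem card_modelVertex (h : ExactlyTwoLong k r L a b) :
    Nat.card (ModelVertex k r L) + 2 * pairCount k r L = k * (k - 1) + 4 := by
  have hdisj : Disjoint (hubPairs a b) ((Icc 1 k).offDiag \ badPairs k r L) := by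
    simp only [hubPairs, disjoint_insert_left, disjoint_singleton_left, mem_sdiff, mem_offDiag,
      mem_Icc]
    omega
  have hsub : badPairs k r L ⊆ (Icc 1 k).offDiag := filter_subset _ _
  rw [show Nat.card (ModelVertex k r L) = _ from Nat.card_coe_set_eq {p | IsModelVertex k r L p},
    show {p | IsModelVertex k r L p} = _ from Set.ext h.isModelVertex_iff, Set.ncard_coe_finset,
    card_union_of_disjoint hdisj, h.card_hubPairs, ← card_badPairs, add_assoc,
    card_sdiff_add_card_eq_card hsub, offDiag_card, Nat.card_Icc, Nat.add_sub_cancel,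
    Nat.mul_sub_one, add_comm]

theorem card_filter_isHub (h : ExactlyTwoLong k r L a b) [Fintype (ModelVertex k r L)] :
    #(univ.filter fun v : ModelVertex k r L => v.IsHub) = 4 := by
  rw [← h.card_hubPairs]
  refine card_bij (fun v _ => v.val) (fun v hv => ?_) (fun v _ w _ => Subtype.ext) fun p hp => ?_
  · have hv : v.val.1 = 0 ∨ v.val.2 = 0 := (mem_filter.mp hv).2
    refine (mem_union.mp ((h.isModelVertex_iff v.val).mp v.2)).resolve_right fun hv' => ?_
    simp only [mem_sdiff, mem_offDiag, mem_Icc] at hv'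
    omega
  · refine ⟨⟨p, (h.isModelVertex_iff p).mpr (mem_union_left _ hp)⟩,
      mem_filter.mpr ⟨mem_univ _, ?_⟩, rfl⟩
    simp only [hubPairs, mem_insert, mem_singleton] at hp
    rcases hp with rfl | rfl | rfl | rfl <;> simp [ModelVertex.IsHub]

theorem card_edgeSet_modelGraph (h : ExactlyTwoLong k r L a b) :
    Nat.card (modelGraph k r L).edgeSet = 4 * (k - 1) := by
  classical
  have := Fintype.ofFinite (ModelVertex k r L)
  have hbip : (modelGraph k r L).IsBipartiteWith
      ↑(univ.filter fun v : ModelVertex k r L => v.IsHub)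
      ↑(univ.filter fun v : ModelVertex k r L => ¬ v.IsHub) := by
    simpa only [coe_filter_univ] using modelGraph_isBipartiteWith_isHub
  rw [Nat.card_eq_fintype_card, card_edgeSet, ← isBipartiteWith_sum_degrees_eq_card_edges hbip,
    sum_const_nat fun v hv => modelGraph_degree_of_isHub h.L_zero h.nonneg (mem_filter.mp hv).2,
    h.card_filter_isHub]

theorem reachable_hub_of_fst_eq_or_snd_eq (h : ExactlyTwoLong k r L a b)
    {v : ModelVertex k r L} (hv : v.val.1 = a ∨ v.val.2 = b) :
    (modelGraph k r L).Reachable v ⟨(a, 0), h.isModelVertex_hub⟩ := by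
  have hfst : ∀ {u : ModelVertex k r L}, u.val.1 = a →
      (modelGraph k r L).Reachable u ⟨(a, 0), h.isModelVertex_hub⟩ := by
    intro u hu
    by_cases hu0 : u.val.2 = 0
    · rw [show u = ⟨(a, 0), h.isModelVertex_hub⟩ from Subtype.ext (Prod.ext hu hu0)]
      exact Reachable.refl _
    · exact ((modelGraph_adj_iff_of_val_eq_mk_zero h.long_left.2 rfl).mpr
        ⟨hu, hu0⟩).reachable.symm
  rcases hv with hv | hv
  · exact hfst hv
  let hubB : ModelVertex k r L := ⟨(0, b), h.symm.isModelVertex_hub.swap⟩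
  let cross : ModelVertex k r L :=
    ⟨(a, b), isModelVertex_of_long_fst h.nonneg h.long_left.1 h.long_left.2 h.long_right.1 h.ne⟩
  have hv_hubB : (modelGraph k r L).Reachable v hubB := by
    by_cases hv0 : v.val.1 = 0
    · rw [show v = hubB from Subtype.ext (Prod.ext hv0 hv)]
    · exact ((modelGraph_adj_iff_of_val_eq_zero_mk h.long_right.2 rfl).mpr
        ⟨hv, hv0⟩).reachable.symm
  have hubB_cross : (modelGraph k r L).Adj hubB cross :=
    (modelGraph_adj_iff_of_val_eq_zero_mk h.long_right.2 rfl).mpr ⟨rfl, h.zero_ne_left.symm⟩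
  exact hv_hubB.trans (hubB_cross.reachable.trans (hfst rfl))

theorem componentLabel_eq_of_adj (h : ExactlyTwoLong k r L a b) {v w : ModelVertex k r L}
    (hvw : (modelGraph k r L).Adj v w) :
    componentLabel a b v.val = componentLabel a b w.val := by
  have hv := v.2.2.2.1
  have hw := w.2.2.2.1
  have hab := h.ne
  rcases hvw with ⟨h1, -, hL⟩ | ⟨h1, -, hL⟩
  · have := (h.long_iff _).mp ⟨v.2.1, hL⟩
    unfold componentLabel
    split_ifs <;> first | rfl | omega
  · have := (h.long_iff _).mp ⟨v.2.2.1, hL⟩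
    unfold componentLabel
    split_ifs <;> first | rfl | omega

theorem reachable_of_componentLabel_eq (h : ExactlyTwoLong k r L a b) {v w : ModelVertex k r L}
    (hvw : componentLabel a b v.val = componentLabel a b w.val) :
    (modelGraph k r L).Reachable v w := by
  have hleft (u : ModelVertex k r L) := componentLabel_eq_left_iff (a := a) (b := b) (p := u.val)
  have hright (u : ModelVertex k r L) := componentLabel_eq_right_iff (a := a) (b := b) u.2.2.2.1
  by_cases hv1 : v.val.1 = a ∨ v.val.2 = b
  · have hw1 := (hleft w).mp (hvw ▸ (hleft v).mpr hv1)
    exact (h.reachable_hub_of_fst_eq_or_snd_eq hv1).trans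
      (h.reachable_hub_of_fst_eq_or_snd_eq hw1).symm
  by_cases hv2 : v.val.1 = b ∨ v.val.2 = a
  · have hw2 := (hright w).mp (hvw ▸ (hright v).mpr hv2)
    exact (h.symm.reachable_hub_of_fst_eq_or_snd_eq hv2).trans
      (h.symm.reachable_hub_of_fst_eq_or_snd_eq hw2).symm
  have hw1 : ¬(w.val.1 = a ∨ w.val.2 = b) := fun hw1 =>
    hv1 ((hleft v).mp (hvw.trans ((hleft w).mpr hw1)))
  have hw2 : ¬(w.val.1 = b ∨ w.val.2 = a) := fun hw2 =>
    hv2 ((hright v).mp (hvw.trans ((hright w).mpr hw2)))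
  rw [componentLabel_of_not hv1 hv2, componentLabel_of_not hw1 hw2] at hvw
  rw [Subtype.ext hvw]

theorem range_componentLabel (h : ExactlyTwoLong k r L a b) :
    Set.range (fun v : ModelVertex k r L => componentLabel a b v.val) =
      ↑(insert (a, b) (insert (b, a)
        ((((Icc 1 k).erase a).erase b).offDiag \ badPairs k r L))) := by
  ext q
  simp only [Set.mem_range, coe_insert, Set.mem_insert_iff, mem_coe]
  constructor
  · rintro ⟨⟨⟨x, y⟩, hxy⟩, rfl⟩
    by_cases hv1 : x = a ∨ y = b
    · exact Or.inl (componentLabel_eq_left_iff.mpr hv1)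
    by_cases hv2 : x = b ∨ y = a
    · exact Or.inr (Or.inl ((componentLabel_eq_right_iff hxy.2.2.1).mpr hv2))
    rw [componentLabel_of_not hv1 hv2]
    right; right
    rcases mem_union.mp ((h.isModelVertex_iff _).mp hxy) with hhub | hiso
    · simp only [hubPairs, mem_insert, mem_singleton, Prod.mk.injEq] at hhub
      omega
    · obtain ⟨hoff, hbad⟩ := mem_sdiff.mp hiso
      simp only [mem_offDiag, mem_Icc] at hoff
      simp only [mem_sdiff, mem_offDiag, mem_erase, mem_Icc]
      exact ⟨by omega, hbad⟩
  · rintro (rfl | rfl | hq)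
    · exact ⟨⟨(a, 0), h.isModelVertex_hub⟩, componentLabel_eq_left_iff.mpr (Or.inl rfl)⟩
    · exact ⟨⟨(b, 0), h.symm.isModelVertex_hub⟩,
        (componentLabel_eq_right_iff h.zero_ne_right.symm).mpr (Or.inl rfl)⟩
    · have hsub : (((Icc 1 k).erase a).erase b).offDiag \ badPairs k r L ⊆
          (Icc 1 k).offDiag \ badPairs k r L :=
        sdiff_subset_sdiff (offDiag_mono ((erase_subset _ _).trans (erase_subset _ _))) le_rfl
      refine ⟨⟨q, (h.isModelVertex_iff q).mpr (mem_union_right _ (hsub hq))⟩, ?_⟩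
      obtain ⟨hq1, hq2, -⟩ := mem_offDiag.mp (mem_sdiff.mp hq).1
      simp only [mem_erase, mem_Icc] at hq1 hq2
      exact componentLabel_of_not (p := q) (by omega) (by omega)

theorem card_connectedComponent (h : ExactlyTwoLong k r L a b) :
    Nat.card (modelGraph k r L).ConnectedComponent + 2 * pairCount k r L =
      (k - 2) * (k - 3) + 2 := by
  set S := ((Icc 1 k).erase a).erase b
  have hS : #S = k - 2 := by
    have ha : a ∈ Icc 1 k :=
      mem_Icc.mpr ⟨Nat.one_le_iff_ne_zero.mpr h.zero_ne_left.symm, h.long_left.1⟩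
    have hb : b ∈ (Icc 1 k).erase a := mem_erase.mpr ⟨h.ne.symm,
      mem_Icc.mpr ⟨Nat.one_le_iff_ne_zero.mpr h.zero_ne_right.symm, h.long_right.1⟩⟩
    rw [card_erase_of_mem hb, card_erase_of_mem ha, Nat.card_Icc, Nat.add_sub_cancel, Nat.sub_sub]
  have hab : (a, b) ∉ insert (b, a) (S.offDiag \ badPairs k r L) := by simp [S, h.ne]
  have hba : (b, a) ∉ S.offDiag \ badPairs k r L := by simp [S]
  rw [card_connectedComponent_eq_ncard_range (fun v => componentLabel a b v.val)
      (fun _ _ => h.componentLabel_eq_of_adj) (fun _ _ => h.reachable_of_componentLabel_eq),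
    h.range_componentLabel, Set.ncard_coe_finset, card_insert_of_notMem hab,
    card_insert_of_notMem hba, ← card_badPairs, add_right_comm, add_right_comm _ 1,
    card_sdiff_add_card_eq_card h.badPairs_subset, offDiag_card, hS,
    show k - 3 = k - 2 - 1 by omega, Nat.mul_sub_one]

end ExactlyTwoLong

theorem exactlyTwoLong_two_three (hk : 3 ≤ k) (hr : 0 < r) (hL0 : L 0 = 0)
    (hLpos : ∀ i, 1 ≤ i → i ≤ k → 0 < L i)
    (hmono : ∀ i j, 2 ≤ i → i ≤ j → j ≤ k → L j ≤ L i)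
    (hL4 : L 4 < r) (hL3 : r ≤ L 3) (hL1 : L 1 < r) : ExactlyTwoLong k r L 2 3 where
  pos := hr
  L_zero := hL0
  nonneg i hi := by
    rcases Nat.eq_zero_or_pos i with rfl | hi0
    · exact hL0.ge
    · exact (hLpos i hi0 hi).le
  ne := by decide
  long_iff x := by
    constructor
    · rintro ⟨hxk, hx⟩
      by_contra hne
      have : L x < r := by
        rcases Nat.lt_or_ge x 4 with hx4 | hx4
        · interval_cases x <;> simp_all
        · exact (hmono 4 x (by norm_num) hx4 hxk).trans_lt hL4
      linarith
    · rintro (rfl | rfl)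
      · exact ⟨by omega, hL3.trans (hmono 2 3 le_rfl (by norm_num) hk)⟩
      · exact ⟨hk, hL3⟩

end ModelGraph

theorem model_counts_middle'_general (k : ℕ) (hk : 4 ≤ k) (r : ℝ) (hr : 0 < r) (L : ℕ → ℝ)
    (hL0 : L 0 = 0) (hLpos : ∀ i, 1 ≤ i → i ≤ k → 0 < L i)
    (hmono : ∀ i j, 2 ≤ i → i ≤ j → j ≤ k → L j ≤ L i)
    (hL4 : L 4 < r) (hL3 : r ≤ L 3) (hL1 : L 1 < r) :
    (Nat.card (ModelVertex k r L) : ℤ)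
        = (k : ℤ) * ((k : ℤ) - 1) + 4 - 2 * (pairCount k r L : ℤ) ∧
    Nat.card (modelGraph k r L).edgeSet = 4 * (k - 1) ∧
    (Nat.card (modelGraph k r L).ConnectedComponent : ℤ)
        = ((k : ℤ) - 2) * ((k : ℤ) - 3) + 2 - 2 * (pairCount k r L : ℤ) ∧
    (Nat.card (modelGraph k r L).edgeSet : ℤ) - (Nat.card (ModelVertex k r L) : ℤ)
      + (Nat.card (modelGraph k r L).ConnectedComponent : ℤ) = 0 := by
  have h := exactlyTwoLong_two_three (by omega) hr hL0 hLpos hmono hL4 hL3 hL1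
  have hV := h.card_modelVertex
  have hE := h.card_edgeSet_modelGraph
  have hC := h.card_connectedComponent
  have hE' := hE
  zify [show 1 ≤ k by omega, show 2 ≤ k by omega, show 3 ≤ k by omega] at hV hE' hC
  refine ⟨by linear_combination hV, hE, by linear_combination hC, ?_⟩
  linear_combination hE' - hV + hC

/-- if `4 ≤ k`, `L 2 ≥ ⋯ ≥ L k`, `L 4 < r ≤ L 3` and `L 1 < r ≤ L 1 + L k`,
then `(G_k)_{r,L}` has `k(k−1) + 4 − 2h` vertices, `4(k−1)` edges and
`(k−2)(k−3) + 2 − 2h` connected components; in particular `e − v + c = 0`. -/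
theorem model_counts_middle' (k : ℕ) (hk : 4 ≤ k) (r : ℝ) (hr : 0 < r) (L : ℕ → ℝ)
    (hL0 : L 0 = 0) (hLpos : ∀ i, 1 ≤ i → i ≤ k → 0 < L i)
    (hmono : ∀ i j, 2 ≤ i → i ≤ j → j ≤ k → L j ≤ L i)
    (hL4 : L 4 < r) (hL3 : r ≤ L 3) (hL1 : L 1 < r) (hL1k : r ≤ L 1 + L k) :
    (Nat.card (ModelVertex k r L) : ℤ)
        = (k : ℤ) * ((k : ℤ) - 1) + 4 - 2 * (pairCount k r L : ℤ) ∧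
    Nat.card (modelGraph k r L).edgeSet = 4 * (k - 1) ∧
    (Nat.card (modelGraph k r L).ConnectedComponent : ℤ)
        = ((k : ℤ) - 2) * ((k : ℤ) - 3) + 2 - 2 * (pairCount k r L : ℤ) ∧
    (Nat.card (modelGraph k r L).edgeSet : ℤ) - (Nat.card (ModelVertex k r L) : ℤ)
      + (Nat.card (modelGraph k r L).ConnectedComponent : ℤ) = 0 :=
  model_counts_middle'_general k hk r hr L hL0 hLpos hmono hL4 hL3 hL1
end

section
/- Let k ≥ 4 and suppose 0 < r ≤ L_i for every i ∈ {2,…,k} (L_1 > 0 arbitrary). Then the restricted second configuration space (Star_k)^2_{r,L} is path-connected. -/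
/-- A point of the metric star graph before identification: a pair `(i, t)` with
`1 ≤ i ≤ k` and `0 ≤ t ≤ L i`, i.e. a point on the `i`-th edge at distance `t` from
the center. -/
def StarPt (k : ℕ) (L : ℕ → ℝ) : Type :=
  {p : ℕ × ℝ // 1 ≤ p.1 ∧ p.1 ≤ k ∧ 0 ≤ p.2 ∧ p.2 ≤ L p.1}

/-- The path pseudodistance on the points of the star graph:
`δ((i,s),(j,t)) = |s − t|` if `i = j` and `s + t` otherwise. -/
noncomputable def starDist {k : ℕ} {L : ℕ → ℝ} (p q : StarPt k L) : ℝ :=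
  if p.val.1 = q.val.1 then |p.val.2 - q.val.2| else p.val.2 + q.val.2

theorem starDist_self {k : ℕ} {L : ℕ → ℝ} (p : StarPt k L) : starDist p p = 0 := by
  simp [starDist]

theorem starDist_comm {k : ℕ} {L : ℕ → ℝ} (p q : StarPt k L) :
    starDist p q = starDist q p := by
  unfold starDist
  rcases eq_or_ne p.val.1 q.val.1 with h | h
  · rw [if_pos h, if_pos h.symm, abs_sub_comm]
  · rw [if_neg h, if_neg h.symm, add_comm]

theorem starDist_triangle {k : ℕ} {L : ℕ → ℝ} (p q s : StarPt k L) :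
    starDist p s ≤ starDist p q + starDist q s := by
  obtain ⟨hp1, hp2, hp3, hp4⟩ := p.prop
  obtain ⟨hq1, hq2, hq3, hq4⟩ := q.prop
  obtain ⟨hs1, hs2, hs3, hs4⟩ := s.prop
  unfold starDist
  by_cases h1 : p.val.1 = q.val.1 <;> by_cases h2 : q.val.1 = s.val.1
  · rw [if_pos (h1.trans h2), if_pos h1, if_pos h2]
    exact abs_sub_le _ _ _
  · rw [if_neg (fun h => h2 (h1.symm.trans h)), if_pos h1, if_neg h2]
    have := le_abs_self (p.val.2 - q.val.2)
    linarith
  · rw [if_neg (fun h => h1 (h.trans h2.symm)), if_neg h1, if_pos h2]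
    have := neg_le_abs (q.val.2 - s.val.2)
    linarith
  · by_cases h3 : p.val.1 = s.val.1
    · rw [if_pos h3, if_neg h1, if_neg h2]
      rw [abs_sub_le_iff]
      constructor <;> linarith
    · rw [if_neg h3, if_neg h1, if_neg h2]
      linarith

/-- The path pseudometric space structure on the points of the star graph. -/
noncomputable instance starPseudoMetricSpace (k : ℕ) (L : ℕ → ℝ) :
    PseudoMetricSpace (StarPt k L) where
  dist := starDist
  dist_self := starDist_self
  dist_comm := starDist_comm
  dist_triangle := starDist_triangle

/-- The metric star graph `Star_k(L)`: the quotient of the pseudometric space of points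
by the identification of points at pseudodistance zero (a metric space). -/
abbrev StarGraph (k : ℕ) (L : ℕ → ℝ) : Type := SeparationQuotient (StarPt k L)

/-- The restricted second configuration space `(Star_k)²_{r,L}`, as a topological subspace
of the product `Star_k(L) × Star_k(L)`. -/
abbrev ConfigSpace (k : ℕ) (L : ℕ → ℝ) (r : ℝ) : Type :=
  {pq : StarGraph k L × StarGraph k L // r ≤ dist pq.1 pq.2}

/-!
Call a configuration *parked* on a long edge `e` (one with `r ≤ L e`) when one point is at
distance `r` from the centre along `e` and the other one is at the centre. Every configuration
slides to a parked one, possibly with its two points exchanged: if both points lie on one edge,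
the inner one retracts to the centre; otherwise one of them lies on a long edge, is pushed out to
its tip, and then the other one retracts. Letting the centre point leave along a second long edge
while the other point comes in exchanges the roles of the points, so passing through a third long
edge that avoids `a` and `c` joins the configurations parked on `a` and on `c`. For `k ≥ 4` the
edges `2, 3, 4` are long.
-/

open Set

def restrictedConfig (X : Type*) [PseudoMetricSpace X] (r : ℝ) : Set (X × X) :=
  {x | r ≤ dist x.1 x.2}

lemma JoinedIn.swap_restrictedConfig {X : Type*} [PseudoMetricSpace X] {r : ℝ} {x y : X × X}
    (h : JoinedIn (restrictedConfig X r) x y) :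
    JoinedIn (restrictedConfig X r) x.swap y.swap :=
  (h.map continuous_swap).mono <| by
    rintro _ ⟨z, hz, rfl⟩
    exact le_of_le_of_eq hz (dist_comm _ _)

lemma joinedIn_of_forall_uIcc {Y : Type*} [TopologicalSpace Y] {F : Set Y} {f : ℝ → Y}
    (hf : Continuous f) {a b : ℝ} (h : ∀ u ∈ uIcc a b, f u ∈ F) : JoinedIn F (f a) (f b) :=
  ((JoinedIn.of_segment_subset (segment_eq_uIcc a b).subset).map hf).mono <| by
    rintro _ ⟨u, hu, rfl⟩
    exact h u hu

def StarEdge (k : ℕ) (L : ℕ → ℝ) : Type := {i : ℕ // 1 ≤ i ∧ i ≤ k ∧ 0 ≤ L i}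

namespace StarEdge
variable {k : ℕ} {L : ℕ → ℝ}

def toStarPt (e : StarEdge k L) (t : Icc 0 (L e.1)) : StarPt k L :=
  ⟨(e.1, t), e.2.1, e.2.2.1, t.2.1, t.2.2⟩

lemma dist_toStarPt (e e' : StarEdge k L) (s : Icc 0 (L e.1)) (t : Icc 0 (L e'.1)) :
    dist (e.toStarPt s) (e'.toStarPt t) = if e.1 = e'.1 then |(s : ℝ) - t| else s + t :=
  rfl

lemma isometry_toStarPt (e : StarEdge k L) : Isometry e.toStarPt :=
  Isometry.of_dist_eq fun s t => by rw [dist_toStarPt, if_pos rfl, Subtype.dist_eq, Real.dist_eq]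

/-- The point at height `t` on the edge `e`; `t` is clamped to `[0, L e]`. -/
noncomputable def pt (e : StarEdge k L) (t : ℝ) : StarGraph k L :=
  SeparationQuotient.mk (e.toStarPt (projIcc 0 (L e.1) e.2.2.2 t))

lemma continuous_pt (e : StarEdge k L) : Continuous e.pt :=
  SeparationQuotient.continuous_mk.comp (e.isometry_toStarPt.continuous.comp continuous_projIcc)

lemma dist_pt {e e' : StarEdge k L} {s t : ℝ} (hs : s ∈ Icc 0 (L e.1))
    (ht : t ∈ Icc 0 (L e'.1)) :
    dist (e.pt s) (e'.pt t) = if e.1 = e'.1 then |s - t| else s + t := by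
  rw [pt, pt, SeparationQuotient.dist_mk, projIcc_of_mem _ hs, projIcc_of_mem _ ht,
    dist_toStarPt]

lemma dist_pt_self {e : StarEdge k L} {s t : ℝ} (hs : s ∈ Icc 0 (L e.1))
    (ht : t ∈ Icc 0 (L e.1)) : dist (e.pt s) (e.pt t) = |s - t| := by
  rw [dist_pt hs ht, if_pos rfl]

lemma dist_pt_of_ne {e e' : StarEdge k L} (h : e.1 ≠ e'.1) {s t : ℝ} (hs : s ∈ Icc 0 (L e.1))
    (ht : t ∈ Icc 0 (L e'.1)) : dist (e.pt s) (e'.pt t) = s + t := by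
  rw [dist_pt hs ht, if_neg h]

lemma pt_zero_eq (e e' : StarEdge k L) : e.pt 0 = e'.pt 0 :=
  dist_eq_zero.1 <| by
    rw [dist_pt ⟨le_rfl, e.2.2.2⟩ ⟨le_rfl, e'.2.2.2⟩]
    split_ifs <;> simp

lemma exists_pt_eq (x : StarGraph k L) :
    ∃ (e : StarEdge k L) (s : ℝ), s ∈ Icc 0 (L e.1) ∧ e.pt s = x := by
  obtain ⟨⟨⟨i, s⟩, h1, hk, h0, hL⟩, rfl⟩ := SeparationQuotient.surjective_mk x
  refine ⟨⟨i, h1, hk, h0.trans hL⟩, s, ⟨h0, hL⟩, ?_⟩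
  simp only [pt, projIcc_of_mem _ ⟨h0, hL⟩]
  rfl

end StarEdge

section Parking
variable {k : ℕ} {L : ℕ → ℝ} {r : ℝ}
open StarEdge

lemma joinedIn_moveFst (e : StarEdge k L) (q : StarGraph k L) {a b : ℝ}
    (h : ∀ u ∈ uIcc a b, r ≤ dist (e.pt u) q) :
    JoinedIn (restrictedConfig _ r) (e.pt a, q) (e.pt b, q) :=
  joinedIn_of_forall_uIcc (f := fun u => (e.pt u, q)) (e.continuous_pt.prodMk continuous_const) h

lemma joinedIn_moveSnd (p : StarGraph k L) (e : StarEdge k L) {a b : ℝ}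
    (h : ∀ u ∈ uIcc a b, r ≤ dist p (e.pt u)) :
    JoinedIn (restrictedConfig _ r) (p, e.pt a) (p, e.pt b) :=
  joinedIn_of_forall_uIcc (f := fun u => (p, e.pt u)) (continuous_const.prodMk e.continuous_pt) h

noncomputable def parkedConfig (r : ℝ) (e : StarEdge k L) : StarGraph k L × StarGraph k L :=
  (e.pt r, e.pt 0)

lemma parkedConfig_mem (hr : 0 ≤ r) {e : StarEdge k L} (he : r ≤ L e.1) :
    parkedConfig r e ∈ restrictedConfig _ r := by
  show r ≤ dist (e.pt r) (e.pt 0)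
  rw [dist_pt_self ⟨hr, he⟩ ⟨le_rfl, e.2.2.2⟩, sub_zero, abs_of_nonneg hr]

lemma joinedIn_parkedConfig_of_le (hr : 0 ≤ r) {e : StarEdge k L} {s : ℝ}
    (hs : s ∈ Icc r (L e.1)) :
    JoinedIn (restrictedConfig _ r) (e.pt s, e.pt 0) (parkedConfig r e) :=
  joinedIn_moveFst e _ fun u hu => by
    rw [uIcc_of_ge hs.1] at hu
    have hu0 : 0 ≤ u := hr.trans hu.1
    rw [dist_pt_self ⟨hu0, hu.2.trans hs.2⟩ ⟨le_rfl, e.2.2.2⟩, sub_zero, abs_of_nonneg hu0]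
    exact hu.1

/-- The centre point leaves along `b` while the other point comes in along `a`. -/
lemma joinedIn_parkedConfig_swap (hr : 0 ≤ r) {a b : StarEdge k L} (ha : r ≤ L a.1)
    (hb : r ≤ L b.1) (hab : a.1 ≠ b.1) :
    JoinedIn (restrictedConfig _ r) (parkedConfig r a) (parkedConfig r b).swap := by
  have hout : JoinedIn (restrictedConfig _ r) (a.pt r, b.pt 0) (a.pt r, b.pt r) :=
    joinedIn_moveSnd _ b fun u hu => by
      rw [uIcc_of_le hr] at hu
      rw [dist_pt_of_ne hab ⟨hr, ha⟩ ⟨hu.1, hu.2.trans hb⟩]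
      linarith [hu.1]
  have hin : JoinedIn (restrictedConfig _ r) (a.pt r, b.pt r) (a.pt 0, b.pt r) :=
    joinedIn_moveFst a _ fun u hu => by
      rw [uIcc_of_ge hr] at hu
      rw [dist_pt_of_ne hab ⟨hu.1, hu.2.trans ha⟩ ⟨hr, hb⟩]
      linarith [hu.1]
  rw [parkedConfig, parkedConfig, Prod.swap_prod_mk, pt_zero_eq a b]
  rw [pt_zero_eq a b] at hin
  exact hout.trans hin

lemma joinedIn_parkedConfig (hr : 0 ≤ r)
    (hS : ∀ a c : ℕ, ∃ b : StarEdge k L, r ≤ L b.1 ∧ b.1 ≠ a ∧ b.1 ≠ c)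
    {a c : StarEdge k L} (ha : r ≤ L a.1) (hc : r ≤ L c.1) :
    JoinedIn (restrictedConfig _ r) (parkedConfig r a) (parkedConfig r c) := by
  obtain ⟨b, hb, hba, hbc⟩ := hS a.1 c.1
  exact (joinedIn_parkedConfig_swap hr ha hb hba.symm).trans
    (joinedIn_parkedConfig_swap hr hc hb hbc.symm).symm

lemma joinedIn_parkedConfig_of_swap (hr : 0 ≤ r)
    (hS : ∀ a c : ℕ, ∃ b : StarEdge k L, r ≤ L b.1 ∧ b.1 ≠ a ∧ b.1 ≠ c)
    {b c : StarEdge k L} (hb : r ≤ L b.1) (hc : r ≤ L c.1) :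
    JoinedIn (restrictedConfig _ r) (parkedConfig r b).swap (parkedConfig r c) := by
  obtain ⟨d, hd, hdb, -⟩ := hS b.1 b.1
  exact (joinedIn_parkedConfig_swap hr hd hb hdb).symm.trans
    (joinedIn_parkedConfig hr hS hd hc)

lemma joinedIn_parkedConfig_of_same_edge (hr : 0 ≤ r) {e : StarEdge k L} {s t : ℝ}
    (hs : s ∈ Icc 0 (L e.1)) (ht : t ∈ Icc 0 (L e.1)) (hts : t + r ≤ s) :
    JoinedIn (restrictedConfig _ r) (e.pt s, e.pt t) (parkedConfig r e) := by
  have hretract : JoinedIn (restrictedConfig _ r) (e.pt s, e.pt t) (e.pt s, e.pt 0) :=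
    joinedIn_moveSnd _ e fun u hu => by
      rw [uIcc_of_ge ht.1] at hu
      rw [dist_pt_self hs ⟨hu.1, hu.2.trans ht.2⟩]
      linarith [le_abs_self (s - u), hu.2]
  exact hretract.trans (joinedIn_parkedConfig_of_le hr ⟨by linarith [ht.1], hs.2⟩)

lemma joinedIn_parkedConfig_of_ne_edge (hr : 0 ≤ r) {e e' : StarEdge k L} (hne : e.1 ≠ e'.1)
    (he : r ≤ L e.1) {s t : ℝ} (hs : s ∈ Icc 0 (L e.1)) (ht : t ∈ Icc 0 (L e'.1))
    (hst : r ≤ s + t) :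
    JoinedIn (restrictedConfig _ r) (e.pt s, e'.pt t) (parkedConfig r e) := by
  have htip : L e.1 ∈ Icc 0 (L e.1) := ⟨e.2.2.2, le_rfl⟩
  have hpush : JoinedIn (restrictedConfig _ r) (e.pt s, e'.pt t) (e.pt (L e.1), e'.pt t) :=
    joinedIn_moveFst e _ fun u hu => by
      rw [uIcc_of_le hs.2] at hu
      rw [dist_pt_of_ne hne ⟨hs.1.trans hu.1, hu.2⟩ ht]
      linarith [hu.1]
  have hretract :
      JoinedIn (restrictedConfig _ r) (e.pt (L e.1), e'.pt t) (e.pt (L e.1), e'.pt 0) :=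
    joinedIn_moveSnd _ e' fun u hu => by
      rw [uIcc_of_ge ht.1] at hu
      rw [dist_pt_of_ne hne htip ⟨hu.1, hu.2.trans ht.2⟩]
      linarith [hu.1]
  rw [pt_zero_eq e' e] at hretract
  exact hpush.trans (hretract.trans (joinedIn_parkedConfig_of_le hr ⟨he, le_rfl⟩))

lemma exists_joinedIn_parkedConfig (hr : 0 ≤ r) (hrL : ∀ i, 2 ≤ i → i ≤ k → r ≤ L i)
    {x : StarGraph k L × StarGraph k L} (hx : x ∈ restrictedConfig _ r) :
    ∃ e : StarEdge k L, r ≤ L e.1 ∧ (JoinedIn (restrictedConfig _ r) x (parkedConfig r e) ∨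
      JoinedIn (restrictedConfig _ r) x.swap (parkedConfig r e)) := by
  obtain ⟨p, q⟩ := x
  obtain ⟨e, s, hs, rfl⟩ := exists_pt_eq p
  obtain ⟨e', t, ht, rfl⟩ := exists_pt_eq q
  have hd : r ≤ dist (e.pt s) (e'.pt t) := hx
  rw [dist_pt hs ht] at hd
  split_ifs at hd with hee
  · obtain rfl : e = e' := Subtype.ext hee
    rcases le_abs'.1 hd with hst | hts
    · exact ⟨e, by linarith [hs.1, ht.2],
        Or.inr (joinedIn_parkedConfig_of_same_edge hr ht hs (by linarith))⟩
    · exact ⟨e, by linarith [ht.1, hs.2],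
        Or.inl (joinedIn_parkedConfig_of_same_edge hr hs ht (by linarith))⟩
  · rcases le_or_gt 2 e.1 with he | he
    · have hre := hrL _ he e.2.2.1
      exact ⟨e, hre, Or.inl (joinedIn_parkedConfig_of_ne_edge hr hee hre hs ht hd)⟩
    · have he' : 2 ≤ e'.1 := by have := e.2.1; have := e'.2.1; omega
      have hre' := hrL _ he' e'.2.2.1
      exact ⟨e', hre', Or.inr (joinedIn_parkedConfig_of_ne_edge hr (Ne.symm hee) hre' ht hs
        (by linarith))⟩

lemma exists_long_starEdge_ne (hk : 4 ≤ k) (hr : 0 < r)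
    (hrL : ∀ i, 2 ≤ i → i ≤ k → r ≤ L i) (a c : ℕ) :
    ∃ b : StarEdge k L, r ≤ L b.1 ∧ b.1 ≠ a ∧ b.1 ≠ c := by
  obtain ⟨i, hi2, hi4, hia, hic⟩ : ∃ i, 2 ≤ i ∧ i ≤ 4 ∧ i ≠ a ∧ i ≠ c := by
    by_cases h2 : 2 ≠ a ∧ 2 ≠ c
    · exact ⟨2, le_rfl, by norm_num, h2⟩
    by_cases h3 : 3 ≠ a ∧ 3 ≠ c
    · exact ⟨3, by norm_num, by norm_num, h3⟩
    exact ⟨4, by norm_num, le_rfl, by omega, by omega⟩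
  have hri := hrL i hi2 (by omega)
  exact ⟨⟨i, by omega, by omega, hr.le.trans hri⟩, hri, hia, hic⟩

end Parking

theorem configSpace_pathConnected_general (k : ℕ) (hk : 4 ≤ k) (r : ℝ) (hr : 0 < r) (L : ℕ → ℝ)
    (hrL : ∀ i, 2 ≤ i → i ≤ k → r ≤ L i) :
    PathConnectedSpace (ConfigSpace k L r) := by
  have hS := exists_long_starEdge_ne (L := L) hk hr hrL
  obtain ⟨e₀, he₀, -⟩ := hS 0 0
  refine isPathConnected_iff_pathConnectedSpace.mp
    ⟨parkedConfig r e₀, parkedConfig_mem hr.le he₀, fun x hx => ?_⟩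
  obtain ⟨e, he, hx | hx⟩ := exists_joinedIn_parkedConfig hr.le hrL hx
  · exact (joinedIn_parkedConfig hr.le hS he₀ he).trans hx.symm
  · have hx' := hx.swap_restrictedConfig
    rw [Prod.swap_swap] at hx'
    exact (joinedIn_parkedConfig_of_swap hr.le hS he he₀).symm.trans hx'.symm

/-- if `4 ≤ k` and `0 < r ≤ L i` for every `i ∈ {2,…,k}` (with `L 1 > 0`
arbitrary), then the restricted second configuration space `(Star_k)²_{r,L}` is
path-connected. -/
theorem configSpace_pathConnected (k : ℕ) (hk : 4 ≤ k) (r : ℝ) (hr : 0 < r) (L : ℕ → ℝ)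
    (hLpos : ∀ i, 1 ≤ i → i ≤ k → 0 < L i)
    (hrL : ∀ i, 2 ≤ i → i ≤ k → r ≤ L i) :
    PathConnectedSpace (ConfigSpace k L r) :=
  configSpace_pathConnected_general k hk r hr L hrL
end

section
/- Let k ≥ 4 and suppose L_i < r for every i ∈ {2,…,k} (no condition is imposed on L_1). Then every nonempty path component of the restricted second configuration space (Star_k)^2_{r,L}, regarded as a subspace, is simply connected. -/
/-!
When `L i < r` for `i ≥ 2`, two points at distance `≥ r` either lie in the interiors of two
distinct short edges (a "flap"), or one of them lies on edge `1` at least `r` closer to its tip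
than the other. Each of these sets is clopen, so it contains the path component of any of its
points. A flap contracts by pushing both points to the tips of their edges. When `L 1 ≥ r`, the
second kind contracts by pushing the leading point to the tip of edge `1` while shrinking the
other point to the center; when `L 1 < r` it is a union of flaps. A contraction of a clopen set
moves each point within its own path component, so every path component is contractible.
-/

open SeparationQuotient unitInterval Metric Set

theorem contractibleSpace_pathComponent_of_isClopen {X : Type*} [TopologicalSpace X]
    {C : Set X} (hC : IsClopen C) {x : X} (hx : x ∈ C) (H : I × C → X) (hH : Continuous H)
    (h0 : ∀ y, H (0, y) = y) (c : X) (h1 : ∀ y, H (1, y) = c) :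
    ContractibleSpace (pathComponent x) := by
  have hxC : pathComponent x ⊆ C :=
    (pathComponent_subset_component x).trans (hC.connectedComponent_subset hx)
  have hmem : ∀ (t : I) (y : C), (y : X) ∈ pathComponent x →
      H (t, y) ∈ pathComponent x := by
    intro t y hy
    have : PathConnectedSpace I := isPathConnected_iff_pathConnectedSpace.1
      ((convex_Icc (0 : ℝ) 1).isPathConnected (nonempty_Icc.2 zero_le_one))
    have hpath := isPathConnected_range (hH.comp (Continuous.prodMk_left (X := I) y))
    rw [← pathComponent_congr hy]
    exact hpath.subset_pathComponent ⟨0, h0 y⟩ ⟨t, rfl⟩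
  rw [contractible_iff_id_nullhomotopic]
  refine ⟨⟨c, h1 ⟨x, hx⟩ ▸ hmem 1 ⟨x, hx⟩ (mem_pathComponent_self x)⟩, ⟨
    { toFun := fun z => ⟨H (z.1, ⟨z.2, hxC z.2.2⟩), hmem z.1 _ z.2.2⟩
      continuous_toFun := by fun_prop
      map_zero_left := fun y => Subtype.ext (h0 _)
      map_one_left := fun y => Subtype.ext (h1 _) }⟩⟩

theorem Homeomorph.image_pathComponent {X Y : Type*} [TopologicalSpace X] [TopologicalSpace Y]
    (e : X ≃ₜ Y) (x : X) : e '' pathComponent x = pathComponent (e x) := by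
  refine Subset.antisymm (image_subset_iff.2 fun y hy => hy.map e.continuous) fun y hy => ?_
  exact ⟨e.symm y, mem_pathComponent_iff.2 (by simpa using hy.map e.symm.continuous),
    e.apply_symm_apply y⟩

namespace StarPt

variable {k : ℕ} {L : ℕ → ℝ}

def mk (i : ℕ) (s : ℝ) (h : 1 ≤ i ∧ i ≤ k ∧ 0 ≤ s ∧ s ≤ L i) : StarPt k L :=
  ⟨(i, s), h⟩

@[simp] theorem mk_edge (i : ℕ) (s : ℝ) (h) : (mk (k := k) (L := L) i s h).1.1 = i := rfl

@[simp] theorem mk_coord (i : ℕ) (s : ℝ) (h) : (mk (k := k) (L := L) i s h).1.2 = s := rfl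

theorem coord_lt_of_edge_ne_one {r : ℝ} (hrL : ∀ i, 2 ≤ i → i ≤ k → L i < r)
    (a : StarPt k L) (ha : a.1.1 ≠ 1) : a.1.2 < r :=
  a.2.2.2.2.trans_lt (hrL _ (by have := a.2.1; omega) a.2.2.1)

def scale (c : I) (a : StarPt k L) : StarPt k L :=
  ⟨(a.1.1, c * a.1.2), a.2.1, a.2.2.1, mul_nonneg c.2.1 a.2.2.2.1,
    (mul_le_of_le_one_left a.2.2.2.1 c.2.2).trans a.2.2.2.2⟩

@[simp] theorem scale_edge (c : I) (a : StarPt k L) : (scale c a).1.1 = a.1.1 := rfl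

@[simp] theorem scale_coord (c : I) (a : StarPt k L) : (scale c a).1.2 = c * a.1.2 := rfl

theorem dist_scale_scale (c : I) (a b : StarPt k L) :
    dist (scale c a) (scale c b) = c * dist a b := by
  change starDist _ _ = c * starDist _ _
  unfold starDist scale
  split_ifs
  · rw [← mul_sub, abs_mul, abs_of_nonneg c.2.1]
  · ring

theorem dist_scale_left (c d : I) (a : StarPt k L) :
    dist (scale c a) (scale d a) = |(c : ℝ) - d| * a.1.2 := by
  change starDist _ _ = _
  unfold starDist scale
  rw [if_pos rfl, ← sub_mul, abs_mul, abs_of_nonneg a.2.2.2.1]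

theorem lipschitzWith_scale (c : I) : LipschitzWith 1 (scale (k := k) (L := L) c) :=
  LipschitzWith.of_dist_le_mul fun a b => by
    rw [dist_scale_scale, NNReal.coe_one, one_mul]
    exact mul_le_of_le_one_left dist_nonneg c.2.2

end StarPt

namespace StarGraph

variable {k : ℕ} {L : ℕ → ℝ}

theorem dist_mk_mk (a b : StarPt k L) :
    dist (mk a) (mk b) = if a.1.1 = b.1.1 then |a.1.2 - b.1.2| else a.1.2 + b.1.2 :=
  dist_mk a b

theorem mk_eq_mk_of_eq_zero {a b : StarPt k L} (ha : a.1.2 = 0) (hb : b.1.2 = 0) :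
    (mk a : StarGraph k L) = mk b := by
  rw [← dist_eq_zero, dist_mk_mk, ha, hb]
  simp

noncomputable def scale (c : I) : StarGraph k L → StarGraph k L :=
  lift (mk ∘ StarPt.scale c) fun _ _ h =>
    mk_eq_mk.2 (h.map (StarPt.lipschitzWith_scale c).continuous)

theorem scale_mk (c : I) (a : StarPt k L) : scale c (mk a) = mk (StarPt.scale c a) := rfl

@[fun_prop]
theorem continuous_scale {X : Type*} [TopologicalSpace X] {c : X → I} {p : X → StarGraph k L}
    (hc : Continuous c) (hp : Continuous p) : Continuous fun x => scale (c x) (p x) := by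
  suffices h : Continuous fun z : I × StarGraph k L => scale z.1 z.2 from h.comp (hc.prodMk hp)
  refine continuous_prod_of_continuous_lipschitzWith' _ 1 (fun c => ?_) fun p => ?_
  · refine LipschitzWith.of_dist_le_mul fun p q => ?_
    obtain ⟨a, rfl⟩ := surjective_mk p
    obtain ⟨b, rfl⟩ := surjective_mk q
    simpa [scale_mk, dist_mk] using (StarPt.lipschitzWith_scale c).dist_le_mul a b
  · obtain ⟨a, rfl⟩ := surjective_mk p
    refine continuous_mk.comp (LipschitzWith.of_dist_le_mul (K := ⟨a.1.2, a.2.2.2.1⟩)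
      fun c d => ?_).continuous
    rw [StarPt.dist_scale_left, mul_comm]
    rfl

theorem scale_one (p : StarGraph k L) : scale 1 p = p := by
  obtain ⟨a, rfl⟩ := surjective_mk p
  rw [scale_mk]
  congr 1
  exact Subtype.ext (by simp [StarPt.scale])

section Edge

variable (hL : ∀ i, 1 ≤ i → i ≤ k → 0 ≤ L i) {i : ℕ} (hi : 1 ≤ i ∧ i ≤ k)

noncomputable def edgePoint (s : ℝ) : StarGraph k L :=
  let t := projIcc 0 (L i) (hL i hi.1 hi.2) s
  mk (StarPt.mk i t ⟨hi.1, hi.2, t.2.1, t.2.2⟩)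

noncomputable def tip : StarGraph k L := edgePoint hL hi (L i)

def openEdge : Set (StarGraph k L) := ball (tip hL hi) (L i)

theorem edgePoint_eq_mk {s : ℝ} (hs : s ∈ Icc 0 (L i)) :
    edgePoint hL hi s = mk (StarPt.mk i s ⟨hi.1, hi.2, hs.1, hs.2⟩) := by
  simp [edgePoint, projIcc_of_mem _ hs]

theorem continuous_edgePoint : Continuous (edgePoint hL hi) := by
  refine continuous_mk.comp (LipschitzWith.of_dist_le_mul (K := 1) fun s t => ?_).continuous
  rw [← SeparationQuotient.dist_mk, dist_mk_mk, StarPt.mk_edge, StarPt.mk_edge, if_pos rfl,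
    StarPt.mk_coord, StarPt.mk_coord, NNReal.coe_one, one_mul, Real.dist_eq]
  exact abs_projIcc_sub_projIcc (hL i hi.1 hi.2)

theorem dist_mk_edgePoint_zero (a : StarPt k L) : dist (mk a) (edgePoint hL hi 0) = a.1.2 := by
  rw [edgePoint_eq_mk hL hi ⟨le_rfl, hL i hi.1 hi.2⟩, dist_mk_mk]
  split_ifs <;> simp [abs_of_nonneg a.2.2.2.1]

theorem dist_mk_tip (a : StarPt k L) :
    dist (mk a) (tip hL hi) = if a.1.1 = i then L i - a.1.2 else a.1.2 + L i := by
  rw [tip, edgePoint_eq_mk hL hi ⟨hL i hi.1 hi.2, le_rfl⟩, dist_mk_mk, StarPt.mk_edge,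
    StarPt.mk_coord]
  split_ifs with h
  · have := a.2.2.2.2
    rw [h] at this
    rw [abs_of_nonpos (by linarith)]
    ring
  · rfl

theorem mk_mem_openEdge (a : StarPt k L) : mk a ∈ openEdge hL hi ↔ a.1.1 = i ∧ 0 < a.1.2 := by
  rw [openEdge, mem_ball, dist_mk_tip]
  have := a.2.2.2.1
  split_ifs with h
  · simp only [h, true_and, sub_lt_self_iff]
  · simp only [h, false_and, iff_false, not_lt]
    linarith

theorem mk_mem_closedBall_tip (a : StarPt k L) :
    mk a ∈ closedBall (tip hL hi) (L i) ↔ a.1.1 = i ∨ a.1.2 = 0 := by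
  rw [mem_closedBall, dist_mk_tip]
  have := a.2.2.2.1
  split_ifs with h
  · simp only [h, true_or, iff_true]
    linarith
  · simp only [h, false_or]
    constructor <;> intro <;> linarith

theorem scale_zero (p : StarGraph k L) : scale 0 p = edgePoint hL hi 0 := by
  obtain ⟨a, rfl⟩ := surjective_mk p
  rw [scale_mk, edgePoint_eq_mk hL hi ⟨le_rfl, hL i hi.1 hi.2⟩]
  exact mk_eq_mk_of_eq_zero (zero_mul _) rfl

noncomputable def towardTip (u : I) (p : StarGraph k L) : StarGraph k L :=
  edgePoint hL hi ((1 - u) * dist p (edgePoint hL hi 0) + u * L i)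

@[fun_prop]
theorem continuous_towardTip {X : Type*} [TopologicalSpace X] {u : X → I}
    {p : X → StarGraph k L} (hu : Continuous u) (hp : Continuous p) :
    Continuous fun x => towardTip hL hi (u x) (p x) :=
  (continuous_edgePoint hL hi).comp (by fun_prop)

theorem towardTip_one (p : StarGraph k L) : towardTip hL hi 1 p = tip hL hi := by
  simp [towardTip, tip]

theorem towardTip_mk (u : I) {a : StarPt k L} (ha : a.1.1 = i) :
    ∃ b : StarPt k L, towardTip hL hi u (mk a) = mk b ∧ b.1.1 = i ∧
      a.1.2 ≤ b.1.2 ∧ b.1.2 = (1 - u) * a.1.2 + u * L i := by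
  have hs : a.1.2 ≤ L i := ha ▸ a.2.2.2.2
  have h1 := mul_nonneg (sub_nonneg.2 u.2.2) a.2.2.2.1
  have h2 := mul_nonneg u.2.1 (sub_nonneg.2 hs)
  have h3 := mul_nonneg (sub_nonneg.2 u.2.2) (sub_nonneg.2 hs)
  have hmem : (1 - u) * a.1.2 + u * L i ∈ Icc 0 (L i) :=
    ⟨by nlinarith [u.2.1, hL i hi.1 hi.2], by nlinarith⟩
  exact ⟨_, by rw [towardTip, dist_mk_edgePoint_zero, edgePoint_eq_mk hL hi hmem], rfl,
    show a.1.2 ≤ (1 - u) * a.1.2 + u * L i by nlinarith, rfl⟩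

theorem towardTip_zero {p : StarGraph k L} (hp : p ∈ openEdge hL hi) :
    towardTip hL hi 0 p = p := by
  obtain ⟨a, rfl⟩ := surjective_mk p
  have ha := ((mk_mem_openEdge hL hi a).1 hp).1
  have hmem : a.1.2 ∈ Icc 0 (L i) := ⟨a.2.2.2.1, ha ▸ a.2.2.2.2⟩
  rw [towardTip, dist_mk_edgePoint_zero]
  simp only [Icc.coe_zero, sub_zero, one_mul, zero_mul, add_zero]
  rw [edgePoint_eq_mk hL hi hmem]
  congr 1
  exact Subtype.ext (Prod.ext ha.symm rfl)

end Edge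

end StarGraph

namespace ConfigSpace

open StarGraph

variable {k : ℕ} {L : ℕ → ℝ} {r : ℝ}

noncomputable def swap : ConfigSpace k L r ≃ₜ ConfigSpace k L r :=
  (Homeomorph.prodComm _ _).subtype fun x => by simp [dist_comm]

theorem exists_mk (x : ConfigSpace k L r) : ∃ a b : StarPt k L, x.1.1 = mk a ∧ x.1.2 = mk b ∧
    r ≤ if a.1.1 = b.1.1 then |a.1.2 - b.1.2| else a.1.2 + b.1.2 := by
  obtain ⟨a, ha⟩ := surjective_mk x.1.1
  obtain ⟨b, hb⟩ := surjective_mk x.1.2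
  exact ⟨a, b, ha.symm, hb.symm, by rw [← dist_mk_mk, ha, hb]; exact x.2⟩

variable (hL : ∀ i, 1 ≤ i → i ≤ k → 0 ≤ L i)

section Flap

variable {i j : ℕ} (hi : 1 ≤ i ∧ i ≤ k) (hj : 1 ≤ j ∧ j ≤ k)

def flap : Set (ConfigSpace k L r) := {x | x.1.1 ∈ openEdge hL hi ∧ x.1.2 ∈ openEdge hL hj}

theorem mem_openEdge_of_mem_closedBall (hr : 0 < r) (hLj : L j < r) {x : ConfigSpace k L r}
    (h1 : x.1.1 ∈ closedBall (tip hL hi) (L i)) (h2 : x.1.2 ∈ closedBall (tip hL hj) (L j)) :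
    x.1.1 ∈ openEdge hL hi := by
  obtain ⟨a, b, ha, hb, hd⟩ := exists_mk x
  rw [ha, mk_mem_closedBall_tip] at h1
  rw [hb, mk_mem_closedBall_tip] at h2
  rw [ha, mk_mem_openEdge]
  rcases a.2.2.2.1.lt_or_eq with hs | hs
  · exact ⟨h1.resolve_right hs.ne', hs⟩
  · -- `x.1` is the center, so `x.2` is at distance `≥ r` from it, which no point of edge `j` is
    have ht : r ≤ b.1.2 := by
      rw [← hs, zero_add, zero_sub, abs_neg, abs_of_nonneg b.2.2.2.1, ite_self] at hd
      exact hd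
    rcases h2 with h2 | h2
    · have := b.2.2.2.2
      rw [h2] at this
      linarith
    · linarith

theorem isClopen_flap (hr : 0 < r) (hLi : L i < r) (hLj : L j < r) :
    IsClopen (flap hL hi hj : Set (ConfigSpace k L r)) := by
  have hclosed : flap hL hi hj =
      {x : ConfigSpace k L r | x.1.1 ∈ closedBall (tip hL hi) (L i) ∧
        x.1.2 ∈ closedBall (tip hL hj) (L j)} := by
    ext x
    refine ⟨fun h => ⟨ball_subset_closedBall h.1, ball_subset_closedBall h.2⟩, fun h => ?_⟩
    exact ⟨mem_openEdge_of_mem_closedBall hL hi hj hr hLj h.1 h.2,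
      mem_openEdge_of_mem_closedBall hL hj hi hr hLi (x := swap x) h.2 h.1⟩
  constructor
  · rw [hclosed]
    exact (isClosed_closedBall.preimage (by fun_prop)).inter
      (isClosed_closedBall.preimage (by fun_prop))
  · exact (isOpen_ball.preimage (by fun_prop)).inter (isOpen_ball.preimage (by fun_prop))

theorem le_dist_towardTip (hij : i ≠ j) {x : ConfigSpace k L r} (hx : x ∈ flap hL hi hj)
    (u : I) : r ≤ dist (towardTip hL hi u x.1.1) (towardTip hL hj u x.1.2) := by
  obtain ⟨a, b, ha, hb, hd⟩ := exists_mk x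
  obtain ⟨hx1, hx2⟩ := hx
  rw [ha, mk_mem_openEdge] at hx1
  rw [hb, mk_mem_openEdge] at hx2
  obtain ⟨a', ha', ha'i, has, -⟩ := towardTip_mk hL hi u hx1.1
  obtain ⟨b', hb', hb'j, hbt, -⟩ := towardTip_mk hL hj u hx2.1
  rw [if_neg (by rw [hx1.1, hx2.1]; exact hij)] at hd
  rw [ha, hb, ha', hb', dist_mk_mk, if_neg (by rw [ha'i, hb'j]; exact hij)]
  linarith

theorem contractibleSpace_pathComponent_of_mem_flap (hr : 0 < r) (hLi : L i < r)
    (hLj : L j < r) (hij : i ≠ j) {x : ConfigSpace k L r} (hx : x ∈ flap hL hi hj) :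
    ContractibleSpace (pathComponent x) := by
  refine contractibleSpace_pathComponent_of_isClopen (isClopen_flap hL hi hj hr hLi hLj) hx
    (fun z => ⟨(towardTip hL hi z.1 z.2.1.1.1, towardTip hL hj z.1 z.2.1.1.2),
      le_dist_towardTip hL hi hj hij z.2.2 z.1⟩) ?_ (fun y => ?_)
    ⟨(tip hL hi, tip hL hj), by simpa [towardTip_one] using le_dist_towardTip hL hi hj hij hx 1⟩
    (fun y => by simp [towardTip_one])
  · fun_prop
  · obtain ⟨y, hy1, hy2⟩ := y
    exact Subtype.ext (Prod.ext (towardTip_zero hL hi hy1) (towardTip_zero hL hj hy2))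

end Flap

section FirstAhead

variable (hk : 1 ≤ k)

def firstAhead : Set (ConfigSpace k L r) :=
  {x | dist x.1.1 (tip hL ⟨le_rfl, hk⟩) + r ≤ dist x.1.2 (tip hL ⟨le_rfl, hk⟩)}

theorem mem_firstAhead_iff (hr : 0 < r) (hrL : ∀ i, 2 ≤ i → i ≤ k → L i < r)
    {x : ConfigSpace k L r} {a b : StarPt k L} (ha : x.1.1 = mk a) (hb : x.1.2 = mk b)
    (hd : r ≤ if a.1.1 = b.1.1 then |a.1.2 - b.1.2| else a.1.2 + b.1.2) :
    x ∈ firstAhead hL hk ↔ a.1.1 = 1 ∧ 0 < a.1.2 ∧ (b.1.1 = 1 → b.1.2 + r ≤ a.1.2) := by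
  have hs := a.2.2.2.1
  have ht := b.2.2.2.1
  change _ + r ≤ _ ↔ _
  rw [ha, hb, dist_mk_tip, dist_mk_tip]
  by_cases ha1 : a.1.1 = 1 <;> by_cases hb1 : b.1.1 = 1 <;>
    simp only [ha1, hb1, if_true, if_false, true_and, false_and, iff_false, forall_const,
      IsEmpty.forall_iff, and_true, not_le] at hd ⊢
  · constructor
    · intro
      exact ⟨by linarith, by linarith⟩
    · intro
      linarith
  · rw [if_neg (Ne.symm hb1)] at hd
    constructor
    · intro
      by_contra
      linarith [StarPt.coord_lt_of_edge_ne_one hrL b hb1]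
    · intro
      linarith
  · linarith
  · linarith [StarPt.coord_lt_of_edge_ne_one hrL b hb1]

theorem firstAhead_eq (hr : 0 < r) (hrL : ∀ i, 2 ≤ i → i ≤ k → L i < r) :
    firstAhead hL hk = {x : ConfigSpace k L r | x.1.1 ∈ openEdge hL ⟨le_rfl, hk⟩} ∩
      {x | dist x.1.1 (tip hL ⟨le_rfl, hk⟩) < dist x.1.2 (tip hL ⟨le_rfl, hk⟩)} := by
  ext x
  obtain ⟨a, b, ha, hb, hd⟩ := exists_mk x
  change _ ↔ x.1.1 ∈ openEdge hL ⟨le_rfl, hk⟩ ∧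
    dist x.1.1 (tip hL ⟨le_rfl, hk⟩) < dist x.1.2 (tip hL ⟨le_rfl, hk⟩)
  rw [mem_firstAhead_iff hL hk hr hrL ha hb hd, ha, hb, mk_mem_openEdge, dist_mk_tip, dist_mk_tip,
    ← and_assoc]
  refine and_congr_right fun ⟨ha1, hs⟩ => ?_
  have := b.2.2.2.1
  by_cases hb1 : b.1.1 = 1
  · rw [hb1, ha1, if_pos rfl] at hd
    simp only [hb1, ha1, if_true, forall_const]
    constructor
    · intro; linarith
    · intro h
      rw [abs_of_pos (by linarith)] at hd
      linarith
  · simp only [hb1, ha1, if_true, if_false, IsEmpty.forall_iff, true_iff]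
    linarith

theorem isClopen_firstAhead (hr : 0 < r) (hrL : ∀ i, 2 ≤ i → i ≤ k → L i < r) :
    IsClopen (firstAhead hL hk : Set (ConfigSpace k L r)) := by
  refine ⟨isClosed_le ?_ ?_, ?_⟩
  · fun_prop
  · fun_prop
  rw [firstAhead_eq hL hk hr hrL]
  refine (isOpen_ball.preimage ?_).inter (isOpen_lt ?_ ?_) <;> fun_prop

theorem le_dist_towardTip_scale (hr : 0 < r) (hrL : ∀ i, 2 ≤ i → i ≤ k → L i < r)
    (hL1 : r ≤ L 1) {x : ConfigSpace k L r} (hx : x ∈ firstAhead hL hk) (u : I) :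
    r ≤ dist (towardTip hL ⟨le_rfl, hk⟩ u x.1.1) (scale (σ u) x.1.2) := by
  obtain ⟨a, b, ha, hb, hd⟩ := exists_mk x
  obtain ⟨ha1, -, hba⟩ := (mem_firstAhead_iff hL hk hr hrL ha hb hd).1 hx
  obtain ⟨a', ha', ha'1, has, hs'⟩ := towardTip_mk hL ⟨le_rfl, hk⟩ u ha1
  have ht := b.2.2.2.1
  have hut : (1 - u) * b.1.2 ≤ b.1.2 := by nlinarith [u.2.1]
  rw [ha, hb, ha', scale_mk, dist_mk_mk]
  simp only [StarPt.scale_edge, StarPt.scale_coord, coe_symm_eq, ha'1]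
  by_cases hb1 : b.1.1 = 1
  · rw [if_pos hb1.symm]
    have := hba hb1
    exact (by linarith : r ≤ a'.1.2 - (1 - u) * b.1.2).trans (le_abs_self _)
  · rw [ha1, if_neg (Ne.symm hb1)] at hd
    rw [if_neg (Ne.symm hb1), hs']
    nlinarith [mul_le_mul_of_nonneg_left hd (sub_nonneg.2 u.2.2),
      mul_le_mul_of_nonneg_left hL1 u.2.1]

theorem exists_mem_flap_of_mem_firstAhead (hr : 0 < r)
    (hrL : ∀ i, 2 ≤ i → i ≤ k → L i < r) (hL1 : L 1 < r) {x : ConfigSpace k L r}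
    (hx : x ∈ firstAhead hL hk) :
    ∃ j, 2 ≤ j ∧ ∃ hj : 1 ≤ j ∧ j ≤ k, x ∈ flap hL ⟨le_rfl, hk⟩ hj := by
  obtain ⟨a, b, ha, hb, hd⟩ := exists_mk x
  obtain ⟨ha1, hs, hba⟩ := (mem_firstAhead_iff hL hk hr hrL ha hb hd).1 hx
  have hsL : a.1.2 < r := (ha1 ▸ a.2.2.2.2).trans_lt hL1
  have hb1 : b.1.1 ≠ 1 := fun hb1 => by linarith [hba hb1, b.2.2.2.1]
  rw [ha1, if_neg (Ne.symm hb1)] at hd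
  refine ⟨b.1.1, by have := b.2.1; omega, ⟨b.2.1, b.2.2.1⟩, ?_, ?_⟩
  · rw [ha, mk_mem_openEdge]
    exact ⟨ha1, hs⟩
  · rw [hb, mk_mem_openEdge]
    exact ⟨rfl, by linarith⟩

theorem contractibleSpace_pathComponent_of_mem_firstAhead (hr : 0 < r)
    (hrL : ∀ i, 2 ≤ i → i ≤ k → L i < r) {x : ConfigSpace k L r}
    (hx : x ∈ firstAhead hL hk) : ContractibleSpace (pathComponent x) := by
  rcases le_or_gt r (L 1) with hL1 | hL1
  · refine contractibleSpace_pathComponent_of_isClopen (isClopen_firstAhead hL hk hr hrL) hx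
      (fun z => ⟨(towardTip hL ⟨le_rfl, hk⟩ z.1 z.2.1.1.1, scale (σ z.1) z.2.1.1.2),
        le_dist_towardTip_scale hL hk hr hrL hL1 z.2.2 z.1⟩) (by fun_prop) (fun y => ?_)
      ⟨(tip hL ⟨le_rfl, hk⟩, edgePoint hL ⟨le_rfl, hk⟩ 0), by
        simpa [towardTip_one, scale_zero hL ⟨le_rfl, hk⟩] using
          le_dist_towardTip_scale hL hk hr hrL hL1 hx 1⟩
      (fun y => by simp [towardTip_one, scale_zero hL ⟨le_rfl, hk⟩])
    obtain ⟨y, hy⟩ := y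
    rw [firstAhead_eq hL hk hr hrL] at hy
    exact Subtype.ext (Prod.ext (towardTip_zero hL _ hy.1) (by simp [scale_one]))
  · obtain ⟨j, hj2, hj, hxj⟩ := exists_mem_flap_of_mem_firstAhead hL hk hr hrL hL1 hx
    exact contractibleSpace_pathComponent_of_mem_flap hL _ hj hr hL1 (hrL j hj2 hj.2) (by omega)
      hxj

theorem mem_firstAhead_or_swap_mem_or_mem_flap (hr : 0 < r)
    (hrL : ∀ i, 2 ≤ i → i ≤ k → L i < r) (x : ConfigSpace k L r) :
    x ∈ firstAhead hL hk ∨ swap x ∈ firstAhead hL hk ∨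
      ∃ i j, 2 ≤ i ∧ 2 ≤ j ∧ i ≠ j ∧
        ∃ (hi : 1 ≤ i ∧ i ≤ k) (hj : 1 ≤ j ∧ j ≤ k), x ∈ flap hL hi hj := by
  obtain ⟨a, b, ha, hb, hd⟩ := exists_mk x
  have hd' : r ≤ if b.1.1 = a.1.1 then |b.1.2 - a.1.2| else b.1.2 + a.1.2 := by
    simpa only [eq_comm, abs_sub_comm, add_comm] using hd
  rw [mem_firstAhead_iff hL hk hr hrL ha hb hd,
    mem_firstAhead_iff hL hk hr hrL (x := swap x) hb ha hd']
  by_cases hab : a.1.1 = b.1.1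
  · rw [if_pos hab] at hd
    have ha1 : a.1.1 = 1 := by
      by_contra ha1
      have hs := StarPt.coord_lt_of_edge_ne_one hrL a ha1
      have ht := StarPt.coord_lt_of_edge_ne_one hrL b (hab ▸ ha1)
      have : |a.1.2 - b.1.2| < r :=
        abs_sub_lt_iff.2 ⟨by linarith [b.2.2.2.1], by linarith [a.2.2.2.1]⟩
      linarith
    rcases le_abs'.1 hd with h | h
    · right; left
      exact ⟨hab ▸ ha1, by linarith [a.2.2.2.1], fun _ => by linarith⟩
    · left
      exact ⟨ha1, by linarith [b.2.2.2.1], fun _ => by linarith⟩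
  rw [if_neg hab] at hd
  by_cases ha1 : a.1.1 = 1
  · left
    have := StarPt.coord_lt_of_edge_ne_one hrL b fun hb1 => hab (ha1.trans hb1.symm)
    exact ⟨ha1, by linarith, fun hb1 => absurd (ha1.trans hb1.symm) hab⟩
  by_cases hb1 : b.1.1 = 1
  · right; left
    have := StarPt.coord_lt_of_edge_ne_one hrL a ha1
    exact ⟨hb1, by linarith, fun ha1' => absurd ha1' ha1⟩
  right; right
  have hs := StarPt.coord_lt_of_edge_ne_one hrL a ha1
  have ht := StarPt.coord_lt_of_edge_ne_one hrL b hb1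
  have := a.2.1
  have := b.2.1
  refine ⟨a.1.1, b.1.1, by omega, by omega, hab, ⟨a.2.1, a.2.2.1⟩, ⟨b.2.1, b.2.2.1⟩, ?_,
    ?_⟩
  · rw [ha, mk_mem_openEdge]
    exact ⟨rfl, by linarith⟩
  · rw [hb, mk_mem_openEdge]
    exact ⟨rfl, by linarith⟩

end FirstAhead

end ConfigSpace

theorem configSpace_components_simplyConnected_general (k : ℕ) (r : ℝ) (hr : 0 < r)
    (L : ℕ → ℝ) (hLpos : ∀ i, 1 ≤ i → i ≤ k → 0 < L i)
    (hrL : ∀ i, 2 ≤ i → i ≤ k → L i < r) :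
    ∀ x : ConfigSpace k L r, SimplyConnectedSpace (pathComponent x) := by
  intro x
  have hL : ∀ i, 1 ≤ i → i ≤ k → 0 ≤ L i := fun i h1 h2 => (hLpos i h1 h2).le
  obtain ⟨a, -⟩ := surjective_mk x.1.1
  have hk : 1 ≤ k := a.2.1.trans a.2.2.1
  have : ContractibleSpace (pathComponent x) := by
    rcases ConfigSpace.mem_firstAhead_or_swap_mem_or_mem_flap hL hk hr hrL x with
      hx | hx | ⟨i, j, hi2, hj2, hij, hi, hj, hx⟩
    · exact ConfigSpace.contractibleSpace_pathComponent_of_mem_firstAhead hL hk hr hrL hx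
    · have := ConfigSpace.contractibleSpace_pathComponent_of_mem_firstAhead hL hk hr hrL hx
      exact ((ConfigSpace.swap.image _).trans
        (.setCongr (ConfigSpace.swap.image_pathComponent x))).contractibleSpace
    · exact ConfigSpace.contractibleSpace_pathComponent_of_mem_flap hL hi hj hr (hrL i hi2 hi.2)
        (hrL j hj2 hj.2) hij hx
  infer_instance

/-- if `4 ≤ k` and `L i < r` for every `i ∈ {2,…,k}` (no condition on
`L 1`), then every nonempty path component of `(Star_k)²_{r,L}` is simply connected. -/
theorem configSpace_components_simplyConnected (k : ℕ) (hk : 4 ≤ k) (r : ℝ) (hr : 0 < r)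
    (L : ℕ → ℝ) (hLpos : ∀ i, 1 ≤ i → i ≤ k → 0 < L i)
    (hrL : ∀ i, 2 ≤ i → i ≤ k → L i < r) :
    ∀ x : ConfigSpace k L r, SimplyConnectedSpace (pathComponent x) :=
  configSpace_components_simplyConnected_general k r hr L hLpos hrL
end
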